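/- arXiv:1509.05727 — 3 statements merged into one kernel-verified Lean document; each statement's English description precedes it below -/
import Mathlib

section
/- Let p be a prime and let Q be a commutative loop satisfying identity (A). Suppose (i) there exist a, b ∈ Q such that the only subset of Q containing a, b and the identity and closed under multiplication and left division is Q itself, and (ii) there is a surjective map ψ : Q → ℤ_p × ℤ_p with ψ(u·v) = ψ(u) + ψ(v) for all u,v, such that K = {q ∈ Q : ψ(q) = 0} is contained in the center Z(Q) and has exactly p elements. Then there exists a surjective map φ : F_p → Q with φ(u·v) = φ(u)·φ(v) for all u,v, such that {u ∈ F_p : φ(u) = 1} is contained in the set of elements of F_p whose first two coordinates are zero (which equals Z(F_p)). -/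
/-- The modular overflow indicator `(a,b)_p`. -/
def ovf (p : ℕ) (a b : ZMod p) : ZMod p := if p ≤ a.val + b.val then 1 else 0

/-- The carrier `(ℤ_p)⁶` of the loop `F_p`. -/
abbrev FpCarrier (p : ℕ) := ZMod p × ZMod p × ZMod p × ZMod p × ZMod p × ZMod p

/-- The multiplication of the loop `F_p`. -/
def fpMul (p : ℕ) : FpCarrier p → FpCarrier p → FpCarrier p
  | (a1, a2, a3, a4, a5, a6), (b1, b2, b3, b4, b5, b6) =>
    (a1 + b1, a2 + b2, a3 + b3 + ovf p a1 b1, a4 + b4 + ovf p a2 b2,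
     a5 + b5 - a1 * b1 * (a2 + b2), a6 + b6 + a2 * b2 * (a1 + b1))

universe u

structure CALCtx (p : ℕ) (Q : Type u) where
  mul : Q → Q → Q
  one : Q
  ld : Q → Q → Q
  hone_mul : ∀ a, mul one a = a
  hmul_one : ∀ a, mul a one = a
  comm : ∀ a b, mul a b = mul b a
  hmul_ld : ∀ a b, mul a (ld a b) = b
  hld_mul : ∀ a b, ld a (mul a b) = b
  hA : ∀ x y a b, ld (mul y x) (mul y (mul x (mul a b))) =
        mul (ld (mul y x) (mul y (mul x a))) (ld (mul y x) (mul y (mul x b)))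
  psi : Q → ZMod p × ZMod p
  hom : ∀ u v, psi (mul u v) = psi u + psi v
  central : ∀ q : Q, psi q = 0 →
      (∀ a, mul q a = mul a q) ∧
      (∀ a b, mul (mul q a) b = mul q (mul a b)) ∧
      (∀ a b, mul (mul a q) b = mul a (mul q b)) ∧
      (∀ a b, mul (mul a b) q = mul a (mul b q))

namespace CALCtx

variable {p : ℕ} {Q : Type u} (C : CALCtx p Q)

lemma cancel_left {a x y : Q} (h : C.mul a x = C.mul a y) : x = y := by
  have h2 := congrArg (C.ld a) h
  rwa [C.hld_mul, C.hld_mul] at h2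

lemma cancel_right {a x y : Q} (h : C.mul x a = C.mul y a) : x = y := by
  apply C.cancel_left (a := a)
  rw [C.comm a x, C.comm a y]; exact h

lemma psi_one : C.psi C.one = 0 := by
  have h := C.hom C.one C.one
  rw [C.hone_mul] at h
  exact (left_eq_add.mp h)

lemma psi_mul {x y : Q} (hx : C.psi x = 0) (hy : C.psi y = 0) :
    C.psi (C.mul x y) = 0 := by rw [C.hom, hx, hy, add_zero]

-- central element lemmas
lemma cmul2 {k : Q} (hk : C.psi k = 0) (x y : Q) :
    C.mul (C.mul k x) y = C.mul k (C.mul x y) := (C.central k hk).2.1 x y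

lemma cmul3 {k : Q} (hk : C.psi k = 0) (x y : Q) :
    C.mul (C.mul x k) y = C.mul x (C.mul k y) := (C.central k hk).2.2.1 x y

lemma cmul4 {k : Q} (hk : C.psi k = 0) (x y : Q) :
    C.mul (C.mul x y) k = C.mul x (C.mul y k) := (C.central k hk).2.2.2 x y

lemma cshift {k : Q} (hk : C.psi k = 0) (x y : Q) :
    C.mul (C.mul x k) y = C.mul (C.mul x y) k := by
  rw [C.cmul3 hk, C.comm k y, ← C.cmul4 hk]

lemma cpair {k k' : Q} (hk : C.psi k = 0) (hk' : C.psi k' = 0) (x y : Q) :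
    C.mul (C.mul x k) (C.mul y k') = C.mul (C.mul x y) (C.mul k k') := by
  rw [← C.cmul4 hk', C.cshift hk, C.cmul4 hk' (C.mul x y) k, C.comm k k',
      ← C.cmul4 hk]

lemma four_shuffle {k1 k2 k3 k4 : Q} (h1 : C.psi k1 = 0) (h2 : C.psi k2 = 0)
    (h3 : C.psi k3 = 0) (h4 : C.psi k4 = 0) :
    C.mul (C.mul k1 k2) (C.mul k3 k4) = C.mul (C.mul k1 k3) (C.mul k2 k4) := by
  rw [C.cmul2 h1, ← C.cmul2 h2, C.comm k2 k3, C.cmul2 h3, ← C.cmul2 h1]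

end CALCtx

namespace CALCtx

variable {p : ℕ} {Q : Type u} (C : CALCtx p Q)

def pw (C : CALCtx p Q) (q : Q) : ℕ → Q
  | 0 => C.one
  | n + 1 => C.mul q (pw C q n)

@[simp] lemma pw_zero (q : Q) : C.pw q 0 = C.one := by rw [pw]
@[simp] lemma pw_succ (q : Q) (n : ℕ) : C.pw q (n + 1) = C.mul q (C.pw q n) := by rw [pw]

lemma psi_pw (q : Q) (n : ℕ) : C.psi (C.pw q n) = n • C.psi q := by
  induction n with
  | zero => simpa using C.psi_one
  | succ n ih => rw [pw_succ, C.hom, ih, succ_nsmul, add_comm]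

lemma pw_one_base (n : ℕ) : C.pw C.one n = C.one := by
  induction n with
  | zero => rfl
  | succ n ih => rw [pw_succ, ih, C.hmul_one]

/-- The associator-type element. -/
def dd (x y c : Q) : Q := C.ld (C.mul (C.mul x y) c) (C.mul x (C.mul y c))

lemma dd_spec (x y c : Q) :
    C.mul (C.mul (C.mul x y) c) (C.dd x y c) = C.mul x (C.mul y c) :=
  C.hmul_ld _ _

lemma psi_dd (x y c : Q) : C.psi (C.dd x y c) = 0 := by
  have h := congrArg C.psi (C.dd_spec x y c)
  rw [C.hom, C.hom, C.hom, C.hom, C.hom] at h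
  rw [add_assoc (C.psi x) (C.psi y) (C.psi c)] at h
  exact add_eq_left.mp h

lemma dd_one3 (x y : Q) : C.dd x y C.one = C.one := by
  apply C.cancel_left (a := C.mul (C.mul x y) C.one)
  rw [C.dd_spec, C.hmul_one, C.hmul_one, C.hmul_one]

lemma dd_one1 (x c : Q) : C.dd C.one x c = C.one := by
  apply C.cancel_left (a := C.mul (C.mul C.one x) c)
  rw [C.dd_spec, C.hone_mul, C.hone_mul, C.hmul_one]

lemma dd_one2 (x c : Q) : C.dd x C.one c = C.one := by
  apply C.cancel_left (a := C.mul (C.mul x C.one) c)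
  rw [C.dd_spec, C.hmul_one, C.hone_mul, C.hmul_one]

lemma dd_diag (y x : Q) : C.dd y x y = C.one := by
  apply C.cancel_left (a := C.mul (C.mul y x) y)
  rw [C.dd_spec, C.hmul_one, C.comm x y, C.comm y (C.mul y x)]

lemma L_eq (y x c : Q) :
    C.ld (C.mul y x) (C.mul y (C.mul x c)) = C.mul c (C.dd y x c) := by
  have h1 : C.mul y (C.mul x c)
      = C.mul (C.mul y x) (C.mul c (C.dd y x c)) := by
    rw [← C.cmul4 (C.psi_dd y x c), C.dd_spec]
  rw [h1, C.hld_mul]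

lemma dd_mul3 (y x a b : Q) :
    C.dd y x (C.mul a b) = C.mul (C.dd y x a) (C.dd y x b) := by
  have h := C.hA x y a b
  rw [C.L_eq, C.L_eq, C.L_eq,
    C.cpair (C.psi_dd y x a) (C.psi_dd y x b)] at h
  exact C.cancel_left h

lemma dd_antisym (y x c : Q) :
    C.mul (C.dd c x y) (C.dd y x c) = C.one := by
  have h1 := C.dd_spec y x c
  have h2 := C.dd_spec c x y
  -- rewrite h2 into : (y(xc)) · dd c x y = (yx)c
  rw [C.comm c x, C.comm (C.mul x c) y] at h2
  -- h2 : (y (x c)) · dd c x y = c (x y)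
  have h2' : C.mul (C.mul y (C.mul x c)) (C.dd c x y) = C.mul (C.mul y x) c := by
    rw [h2, C.comm c (C.mul x y), C.comm x y]
  -- plug into h1
  have h3 : C.mul (C.mul (C.mul y (C.mul x c)) (C.dd c x y)) (C.dd y x c)
      = C.mul y (C.mul x c) := by rw [h2']; exact h1
  rw [C.cmul4 (C.psi_dd y x c)] at h3
  apply C.cancel_left (a := C.mul y (C.mul x c))
  rw [h3, C.hmul_one]

lemma dd_mid (y x c : Q) :
    C.dd y x c = C.mul (C.dd x y c) (C.dd y c x) := by
  have h1 := C.dd_spec x y c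
  have h3 := C.dd_spec y c x
  have h0 := C.dd_spec y x c
  -- (yc)x = x(yc)
  rw [C.comm (C.mul y c) x] at h3
  -- h3 : (x (y c)) · dd y c x = y (c x)
  rw [← h1] at h3
  -- h3 : (((xy)c)·dd x y c) · dd y c x = y (c x)
  rw [C.cmul4 (C.psi_dd y c x), C.comm x y, C.comm c x] at h3
  -- h3 : ((yx)c) · (dd x y c · dd y c x) = y (x c)
  rw [← h0] at h3
  exact (C.cancel_left h3).symm

lemma dd_mul1 (y z x c : Q) :
    C.dd (C.mul y z) x c = C.mul (C.dd y x c) (C.dd z x c) := by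
  have e1 := C.dd_antisym (C.mul y z) x c
  have e2 : C.mul (C.dd c x (C.mul y z))
      (C.mul (C.dd y x c) (C.dd z x c)) = C.one := by
    rw [C.dd_mul3,
      C.four_shuffle (C.psi_dd c x y) (C.psi_dd c x z) (C.psi_dd y x c) (C.psi_dd z x c),
      C.dd_antisym, C.dd_antisym, C.hmul_one]
  exact C.cancel_left (e1.trans e2.symm)

lemma dd_mul2 (y x z c : Q) :
    C.dd y (C.mul x z) c = C.mul (C.dd y x c) (C.dd y z c) := by
  rw [C.dd_mid y (C.mul x z) c, C.dd_mul1, C.dd_mul3,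
    C.four_shuffle (C.psi_dd x y c) (C.psi_dd z y c) (C.psi_dd y c x) (C.psi_dd y c z),
    ← C.dd_mid, ← C.dd_mid]

lemma dd_pw3 (y x c : Q) (n : ℕ) : C.dd y x (C.pw c n) = C.pw (C.dd y x c) n := by
  induction n with
  | zero => simpa using C.dd_one3 y x
  | succ n ih => rw [pw_succ, C.dd_mul3, ih, pw_succ]

lemma dd_pw1 (y x c : Q) (n : ℕ) : C.dd (C.pw y n) x c = C.pw (C.dd y x c) n := by
  induction n with
  | zero => simpa using C.dd_one1 x c
  | succ n ih => rw [pw_succ, C.dd_mul1, ih, pw_succ]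

lemma dd_pw2 (y x c : Q) (n : ℕ) : C.dd y (C.pw x n) c = C.pw (C.dd y x c) n := by
  induction n with
  | zero => simpa using C.dd_one2 y c
  | succ n ih => rw [pw_succ, C.dd_mul2, ih, pw_succ]

lemma pw_add (q : Q) (m n : ℕ) :
    C.mul (C.pw q m) (C.pw q n) = C.pw q (m + n) := by
  induction m with
  | zero => rw [pw_zero, C.hone_mul, Nat.zero_add]
  | succ m ih =>
    have hd : C.dd q (C.pw q m) (C.pw q n) = C.one := by
      rw [C.dd_pw2, C.dd_pw3, C.dd_diag, C.pw_one_base, C.pw_one_base]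
    have h := C.dd_spec q (C.pw q m) (C.pw q n)
    rw [hd, C.hmul_one, ih] at h
    rw [pw_succ, h, Nat.add_right_comm, pw_succ]

lemma pw_mul (q : Q) (m n : ℕ) : C.pw (C.pw q m) n = C.pw q (m * n) := by
  induction n with
  | zero => rw [Nat.mul_zero, pw_zero, pw_zero]
  | succ n ih =>
    rw [pw_succ, ih, C.pw_add, Nat.mul_succ, Nat.add_comm]

end CALCtx

namespace CALCtx

variable {p : ℕ} {Q : Type u} (C : CALCtx p Q)

lemma prod_formula (a b : Q) (i j l m : ℕ) :
    C.mul (C.mul (C.mul (C.pw a i) (C.pw b j)) (C.mul (C.pw a l) (C.pw b m)))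
        (C.pw (C.dd a b b) ((m*j)*i + (m*j)*l))
    = C.mul (C.mul (C.pw a (i+l)) (C.pw b (j+m)))
        (C.pw (C.dd a a b) (((j+m)*l)*i)) := by
  have hψt : ∀ n, C.psi (C.pw (C.dd a b b) n) = 0 := fun n => by
    rw [C.psi_pw, C.psi_dd, smul_zero]
  have hv0 : C.dd (C.pw b j) (C.pw a l) (C.pw b m) = C.one := by
    rw [C.dd_pw1, C.dd_pw2, C.dd_pw3, C.dd_diag, C.pw_one_base, C.pw_one_base,
      C.pw_one_base]
  have step1 : C.mul (C.pw b j) (C.mul (C.pw a l) (C.pw b m))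
      = C.mul (C.mul (C.pw a l) (C.pw b j)) (C.pw b m) := by
    have h := C.dd_spec (C.pw b j) (C.pw a l) (C.pw b m)
    rw [hv0, C.hmul_one] at h
    rw [← h, C.comm (C.pw b j) (C.pw a l)]
  have hβ := C.dd_spec (C.pw a l) (C.pw b j) (C.pw b m)
  rw [show C.dd (C.pw a l) (C.pw b j) (C.pw b m) = C.pw (C.dd a b b) ((m*j)*l) by
      rw [C.dd_pw1, C.dd_pw2, C.dd_pw3, C.pw_mul, C.pw_mul, Nat.mul_assoc]] at hβ
  have hγ := C.dd_spec (C.pw a i) (C.pw b j) (C.mul (C.pw a l) (C.pw b m))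
  rw [show C.dd (C.pw a i) (C.pw b j) (C.mul (C.pw a l) (C.pw b m))
        = C.pw (C.dd a b b) ((m*j)*i) by
      rw [C.dd_mul3, C.dd_pw1, C.dd_pw1, C.dd_pw2, C.dd_pw2, C.dd_pw3, C.dd_pw3,
        C.dd_diag, C.pw_one_base, C.pw_one_base, C.pw_one_base, C.hone_mul,
        C.pw_mul, C.pw_mul, Nat.mul_assoc]] at hγ
  calc
    C.mul (C.mul (C.mul (C.pw a i) (C.pw b j)) (C.mul (C.pw a l) (C.pw b m)))
        (C.pw (C.dd a b b) ((m*j)*i + (m*j)*l))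
      = C.mul (C.mul (C.mul (C.mul (C.pw a i) (C.pw b j))
          (C.mul (C.pw a l) (C.pw b m))) (C.pw (C.dd a b b) ((m*j)*i)))
          (C.pw (C.dd a b b) ((m*j)*l)) := by
        rw [C.cmul4 (hψt ((m*j)*l)), C.pw_add]
    _ = C.mul (C.mul (C.pw a i) (C.mul (C.pw b j) (C.mul (C.pw a l) (C.pw b m))))
          (C.pw (C.dd a b b) ((m*j)*l)) := by rw [hγ]
    _ = C.mul (C.mul (C.pw a i) (C.mul (C.mul (C.pw a l) (C.pw b j)) (C.pw b m)))
          (C.pw (C.dd a b b) ((m*j)*l)) := by rw [step1]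
    _ = C.mul (C.pw a i) (C.mul (C.mul (C.mul (C.pw a l) (C.pw b j)) (C.pw b m))
          (C.pw (C.dd a b b) ((m*j)*l))) := by rw [C.cmul4 (hψt ((m*j)*l))]
    _ = C.mul (C.pw a i) (C.mul (C.pw a l) (C.mul (C.pw b j) (C.pw b m))) := by
          rw [hβ]
    _ = C.mul (C.pw a i) (C.mul (C.pw a l) (C.pw b (j+m))) := by rw [C.pw_add]
    _ = C.mul (C.mul (C.mul (C.pw a i) (C.pw a l)) (C.pw b (j+m)))
          (C.dd (C.pw a i) (C.pw a l) (C.pw b (j+m))) := (C.dd_spec _ _ _).symm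
    _ = C.mul (C.mul (C.pw a (i+l)) (C.pw b (j+m)))
          (C.pw (C.dd a a b) (((j+m)*l)*i)) := by
        rw [C.pw_add, C.dd_pw1, C.dd_pw2, C.dd_pw3, C.pw_mul, C.pw_mul,
          Nat.mul_assoc]

end CALCtx

/-- Explicit left division in `F_p`. -/
def fpLd (p : ℕ) (u v : FpCarrier p) : FpCarrier p :=
  (v.1 - u.1, v.2.1 - u.2.1,
   v.2.2.1 - u.2.2.1 - ovf p u.1 (v.1 - u.1),
   v.2.2.2.1 - u.2.2.2.1 - ovf p u.2.1 (v.2.1 - u.2.1),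
   v.2.2.2.2.1 - u.2.2.2.2.1 + u.1 * (v.1 - u.1) * v.2.1,
   v.2.2.2.2.2 - u.2.2.2.2.2 - u.2.1 * (v.2.1 - u.2.1) * v.1)

lemma fpMul_fpLd (p : ℕ) (u v : FpCarrier p) : fpMul p u (fpLd p u v) = v := by
  obtain ⟨u1, u2, u3, u4, u5, u6⟩ := u
  obtain ⟨v1, v2, v3, v4, v5, v6⟩ := v
  simp only [fpMul, fpLd]
  refine Prod.ext ?_ (Prod.ext ?_ (Prod.ext ?_ (Prod.ext ?_ (Prod.ext ?_ ?_)))) <;>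
    simp <;> ring

set_option maxHeartbeats 1000000 in
theorem CALCtx.main {p : ℕ} (hp : p.Prime) {Q : Type u} (C : CALCtx p Q)
    (hgen : ∃ a b : Q, ∀ S : Set Q, a ∈ S → b ∈ S → C.one ∈ S →
      (∀ u v, u ∈ S → v ∈ S → C.mul u v ∈ S) →
      (∀ u v, u ∈ S → v ∈ S → C.ld u v ∈ S) → S = Set.univ)
    (hsurj : Function.Surjective C.psi)
    (hcard : Set.ncard {q : Q | C.psi q = 0} = p) :
    ∃ φ : FpCarrier p → Q,
      Function.Surjective φ ∧
      (∀ u v, φ (fpMul p u v) = C.mul (φ u) (φ v)) ∧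
      (∀ u : FpCarrier p, φ u = C.one → u.1 = 0 ∧ u.2.1 = 0) := by
  haveI : NeZero p := ⟨hp.ne_zero⟩
  haveI : Fact (1 < p) := ⟨hp.one_lt⟩
  obtain ⟨a, b, hgen⟩ := hgen
  -- the group structure on the kernel
  letI K := {q : Q // C.psi q = 0}
  letI : CommGroup K :=
    { mul := fun g h => ⟨C.mul g.1 h.1, C.psi_mul g.2 h.2⟩
      one := ⟨C.one, C.psi_one⟩
      inv := fun g => ⟨C.ld g.1 C.one, by
        have h := C.hom g.1 (C.ld g.1 C.one)
        rw [C.hmul_ld, C.psi_one, g.2, zero_add] at h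
        exact h.symm⟩
      mul_assoc := fun g h k => Subtype.ext (C.cmul2 g.2 h.1 k.1)
      one_mul := fun g => Subtype.ext (C.hone_mul g.1)
      mul_one := fun g => Subtype.ext (C.hmul_one g.1)
      inv_mul_cancel := fun g => Subtype.ext (by
        show C.mul (C.ld g.1 C.one) g.1 = C.one
        rw [C.comm, C.hmul_ld])
      mul_comm := fun g h => Subtype.ext (C.comm g.1 h.1) }
  have hfin : ({q : Q | C.psi q = 0}).Finite := by
    by_contra hinf
    rw [Set.Infinite.ncard hinf] at hcard
    exact hp.ne_zero hcard.symm
  haveI : Finite K := hfin.to_subtype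
  have hcardK : Nat.card K = p := by
    rw [← hcard, ← Nat.card_coe_set_eq]
    rfl
  have hordp : ∀ g : K, g ^ p = 1 := fun g => by
    rw [← hcardK]; exact pow_card_eq_one'
  have hpowmod : ∀ (g : K) (m n : ℕ), ((m : ZMod p) = (n : ZMod p)) → g ^ m = g ^ n := by
    intro g m n h
    have key : ∀ r : ℕ, g ^ r = g ^ (r % p) := by
      intro r
      conv_lhs => rw [← Nat.mod_add_div r p]
      rw [pow_add, pow_mul, hordp, one_pow, mul_one]
    rw [key m, key n, (ZMod.natCast_eq_natCast_iff' m n p).mp h]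
  have hcoe_mul : ∀ g h : K, ((g * h : K) : Q) = C.mul g.1 h.1 := fun _ _ => rfl
  have hcoe_one : ((1 : K) : Q) = C.one := rfl
  have hcoe_pow : ∀ (g : K) (n : ℕ), ((g ^ n : K) : Q) = C.pw g.1 n := by
    intro g n
    induction n with
    | zero => rw [pow_zero, C.pw_zero]; exact hcoe_one
    | succ n ih => rw [pow_succ', hcoe_mul, ih, C.pw_succ]
  -- distinguished kernel elements
  have hpsmul : ∀ x : ZMod p × ZMod p, p • x = 0 := by
    intro x
    rw [← Nat.cast_smul_eq_nsmul (ZMod p), ZMod.natCast_self, zero_smul]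
  have hZAψ : C.psi (C.pw a p) = 0 := by rw [C.psi_pw, hpsmul]
  have hZBψ : C.psi (C.pw b p) = 0 := by rw [C.psi_pw, hpsmul]
  set ZA : K := ⟨C.pw a p, hZAψ⟩ with hZA
  set ZB : K := ⟨C.pw b p, hZBψ⟩ with hZB
  set S : K := ⟨C.dd a a b, C.psi_dd a a b⟩ with hS
  set T' : K := ⟨C.dd a b b, C.psi_dd a b b⟩ with hT'
  set φ : FpCarrier p → Q := fun w =>
    C.mul (C.mul (C.pw a w.1.val) (C.pw b w.2.1.val))
      ((ZA ^ w.2.2.1.val * ZB ^ w.2.2.2.1.val * S ^ (-w.2.2.2.2.1).val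
        * T' ^ (-w.2.2.2.2.2).val : K) : Q) with hφ
  have hφc : ∀ x1 x2 x3 x4 x5 x6 : ZMod p,
      φ (x1, x2, x3, x4, x5, x6)
      = C.mul (C.mul (C.pw a x1.val) (C.pw b x2.val))
        ((ZA ^ x3.val * ZB ^ x4.val * S ^ (-x5).val * T' ^ (-x6).val : K) : Q) :=
    fun _ _ _ _ _ _ => rfl
  -- merging lemmas
  have hmerge : ∀ (X : Q) (g h : K),
      C.mul (C.mul X (g : Q)) (h : Q) = C.mul X ((g * h : K) : Q) := by
    intro X g h
    rw [C.cmul4 h.2, hcoe_mul]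
  have hpair : ∀ (X Y : Q) (g h : K),
      C.mul (C.mul X (g : Q)) (C.mul Y (h : Q)) = C.mul (C.mul X Y) ((g * h : K) : Q) := by
    intro X Y g h
    rw [C.cpair g.2 h.2, hcoe_mul]
  -- prod formula with coerced correction terms
  have hPF : ∀ (i j l m : ℕ),
      C.mul (C.mul (C.mul (C.pw a i) (C.pw b j)) (C.mul (C.pw a l) (C.pw b m)))
        ((T' ^ (m*j*i + m*j*l) : K) : Q)
      = C.mul (C.mul (C.pw a (i+l)) (C.pw b (j+m))) ((S ^ ((j+m)*l*i) : K) : Q) := by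
    intro i j l m
    rw [hcoe_pow, hcoe_pow]
    exact C.prod_formula a b i j l m
  -- splitting a power exceeding p
  have hsplit : ∀ (x : Q) (hx : C.psi (C.pw x p) = 0) (y z : ZMod p),
      C.pw x (y.val + z.val)
      = C.mul (C.pw x ((y + z).val)) ((((⟨C.pw x p, hx⟩ : K)) ^ ((y.val + z.val)/p) : K) : Q) := by
    intro x hx y z
    rw [hcoe_pow]
    show C.pw x (y.val + z.val)
      = C.mul (C.pw x ((y + z).val)) (C.pw (C.pw x p) ((y.val + z.val)/p))
    rw [C.pw_mul, C.pw_add]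
    congr 1
    rw [ZMod.val_add]
    exact (Nat.mod_add_div _ p).symm
  -- cast of the carry
  have hdiv : ∀ y z : ZMod p, (((y.val + z.val) / p : ℕ) : ZMod p) = ovf p y z := by
    intro y z
    rcases le_or_gt p (y.val + z.val) with h | h
    · rw [Nat.div_eq_of_lt_le (k := 1) (by omega)
        (by have := ZMod.val_lt y; have := ZMod.val_lt z; omega)]
      rw [ovf, if_pos h]; norm_num
    · rw [Nat.div_eq_of_lt h, ovf, if_neg (not_le.mpr h)]; norm_num
  -- homomorphism property
  have hhom : ∀ u v, φ (fpMul p u v) = C.mul (φ u) (φ v) := by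
    intro u v
    obtain ⟨u1, u2, u3, u4, u5, u6⟩ := u
    obtain ⟨v1, v2, v3, v4, v5, v6⟩ := v
    have hw : fpMul p (u1, u2, u3, u4, u5, u6) (v1, v2, v3, v4, v5, v6)
        = (u1 + v1, u2 + v2, u3 + v3 + ovf p u1 v1, u4 + v4 + ovf p u2 v2,
           u5 + v5 - u1 * v1 * (u2 + v2), u6 + v6 + u2 * v2 * (u1 + v1)) := rfl
    rw [hw, hφc, hφc, hφc]
    -- congruence facts
    have hc3 : (((u3 + v3 + ovf p u1 v1).val : ℕ) : ZMod p)
        = ((((u1.val + v1.val)/p) + (u3.val + v3.val) : ℕ) : ZMod p) := by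
      simp only [Nat.cast_add, ZMod.natCast_val, ZMod.cast_id, hdiv]
      ring
    have hc4 : (((u4 + v4 + ovf p u2 v2).val : ℕ) : ZMod p)
        = ((((u2.val + v2.val)/p) + (u4.val + v4.val) : ℕ) : ZMod p) := by
      simp only [Nat.cast_add, ZMod.natCast_val, ZMod.cast_id, hdiv]
      ring
    have hc5 : (((-(u5 + v5 - u1 * v1 * (u2 + v2))).val : ℕ) : ZMod p)
        = (((u2.val + v2.val) * v1.val * u1.val + ((-u5).val + (-v5).val) : ℕ) : ZMod p) := by
      simp only [Nat.cast_add, Nat.cast_mul, ZMod.natCast_val, ZMod.cast_id]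
      ring
    have hc6 : (((-(u6 + v6 + u2 * v2 * (u1 + v1))).val
          + (v2.val * u2.val * u1.val + v2.val * u2.val * v1.val) : ℕ) : ZMod p)
        = (((-u6).val + (-v6).val : ℕ) : ZMod p) := by
      simp only [Nat.cast_add, Nat.cast_mul, ZMod.natCast_val, ZMod.cast_id]
      ring
    -- the kernel-part identity
    have hKid : (ZA ^ (u3 + v3 + ovf p u1 v1).val * ZB ^ (u4 + v4 + ovf p u2 v2).val
          * S ^ (-(u5 + v5 - u1 * v1 * (u2 + v2))).val
          * T' ^ (-(u6 + v6 + u2 * v2 * (u1 + v1))).val : K)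
          * T' ^ (v2.val * u2.val * u1.val + v2.val * u2.val * v1.val)
        = (ZA ^ ((u1.val + v1.val)/p) * ZB ^ ((u2.val + v2.val)/p))
          * (S ^ ((u2.val + v2.val) * v1.val * u1.val)
            * ((ZA ^ u3.val * ZB ^ u4.val * S ^ (-u5).val * T' ^ (-u6).val)
              * (ZA ^ v3.val * ZB ^ v4.val * S ^ (-v5).val * T' ^ (-v6).val))) := by
      rw [mul_assoc, ← pow_add]
      rw [hpowmod ZA _ _ hc3, hpowmod ZB _ _ hc4, hpowmod S _ _ hc5, hpowmod T' _ _ hc6]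
      simp only [pow_add]
      ac_rfl
    apply C.cancel_right
      (a := ((T' ^ (v2.val * u2.val * u1.val + v2.val * u2.val * v1.val) : K) : Q))
    calc
      C.mul (C.mul (C.mul (C.pw a ((u1 + v1).val)) (C.pw b ((u2 + v2).val)))
          ((ZA ^ (u3 + v3 + ovf p u1 v1).val * ZB ^ (u4 + v4 + ovf p u2 v2).val
            * S ^ (-(u5 + v5 - u1 * v1 * (u2 + v2))).val
            * T' ^ (-(u6 + v6 + u2 * v2 * (u1 + v1))).val : K) : Q))
          ((T' ^ (v2.val * u2.val * u1.val + v2.val * u2.val * v1.val) : K) : Q)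
        = C.mul (C.mul (C.pw a ((u1 + v1).val)) (C.pw b ((u2 + v2).val)))
            (((ZA ^ (u3 + v3 + ovf p u1 v1).val * ZB ^ (u4 + v4 + ovf p u2 v2).val
              * S ^ (-(u5 + v5 - u1 * v1 * (u2 + v2))).val
              * T' ^ (-(u6 + v6 + u2 * v2 * (u1 + v1))).val : K)
              * T' ^ (v2.val * u2.val * u1.val + v2.val * u2.val * v1.val) : K) : Q) := by
          rw [hmerge]
      _ = C.mul (C.mul (C.pw a ((u1 + v1).val)) (C.pw b ((u2 + v2).val)))
            (((ZA ^ ((u1.val + v1.val)/p) * ZB ^ ((u2.val + v2.val)/p))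
              * (S ^ ((u2.val + v2.val) * v1.val * u1.val)
                * ((ZA ^ u3.val * ZB ^ u4.val * S ^ (-u5).val * T' ^ (-u6).val)
                  * (ZA ^ v3.val * ZB ^ v4.val * S ^ (-v5).val * T' ^ (-v6).val))) : K) : Q) := by
          rw [hKid]
      _ = C.mul (C.mul (C.mul (C.pw a ((u1 + v1).val))
              ((ZA ^ ((u1.val + v1.val)/p) : K) : Q))
            (C.mul (C.pw b ((u2 + v2).val)) ((ZB ^ ((u2.val + v2.val)/p) : K) : Q)))
            (((S ^ ((u2.val + v2.val) * v1.val * u1.val)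
              * ((ZA ^ u3.val * ZB ^ u4.val * S ^ (-u5).val * T' ^ (-u6).val)
                * (ZA ^ v3.val * ZB ^ v4.val * S ^ (-v5).val * T' ^ (-v6).val))) : K) : Q) := by
          rw [← hmerge, hpair]
      _ = C.mul (C.mul (C.pw a (u1.val + v1.val)) (C.pw b (u2.val + v2.val)))
            (((S ^ ((u2.val + v2.val) * v1.val * u1.val)
              * ((ZA ^ u3.val * ZB ^ u4.val * S ^ (-u5).val * T' ^ (-u6).val)
                * (ZA ^ v3.val * ZB ^ v4.val * S ^ (-v5).val * T' ^ (-v6).val))) : K) : Q) := by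
          rw [hsplit a hZAψ u1 v1, hsplit b hZBψ u2 v2]
      _ = C.mul (C.mul (C.mul (C.pw a (u1.val + v1.val)) (C.pw b (u2.val + v2.val)))
            ((S ^ ((u2.val + v2.val) * v1.val * u1.val) : K) : Q))
            (((ZA ^ u3.val * ZB ^ u4.val * S ^ (-u5).val * T' ^ (-u6).val)
              * (ZA ^ v3.val * ZB ^ v4.val * S ^ (-v5).val * T' ^ (-v6).val) : K) : Q) := by
          rw [hmerge]
      _ = C.mul (C.mul (C.mul (C.mul (C.pw a u1.val) (C.pw b u2.val))
              (C.mul (C.pw a v1.val) (C.pw b v2.val)))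
            ((T' ^ (v2.val * u2.val * u1.val + v2.val * u2.val * v1.val) : K) : Q))
            (((ZA ^ u3.val * ZB ^ u4.val * S ^ (-u5).val * T' ^ (-u6).val)
              * (ZA ^ v3.val * ZB ^ v4.val * S ^ (-v5).val * T' ^ (-v6).val) : K) : Q) := by
          rw [hPF]
      _ = C.mul (C.mul (C.mul (C.mul (C.pw a u1.val) (C.pw b u2.val))
            ((ZA ^ u3.val * ZB ^ u4.val * S ^ (-u5).val * T' ^ (-u6).val : K) : Q))
            (C.mul (C.mul (C.pw a v1.val) (C.pw b v2.val))
            ((ZA ^ v3.val * ZB ^ v4.val * S ^ (-v5).val * T' ^ (-v6).val : K) : Q)))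
            ((T' ^ (v2.val * u2.val * u1.val + v2.val * u2.val * v1.val) : K) : Q) := by
          rw [hpair, C.cshift ((T' ^ (v2.val * u2.val * u1.val + v2.val * u2.val * v1.val) : K)).2]
  -- surjectivity
  have hsurjφ : Function.Surjective φ := by
    have hrange : Set.range φ = Set.univ := by
      apply hgen
      · refine ⟨(1, 0, 0, 0, 0, 0), ?_⟩
        rw [hφc]
        simp only [ZMod.val_one, ZMod.val_zero, neg_zero, pow_zero, mul_one, one_mul,
          hcoe_one, C.pw_zero, C.pw_succ, C.hmul_one, C.hone_mul]
      · refine ⟨(0, 1, 0, 0, 0, 0), ?_⟩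
        rw [hφc]
        simp only [ZMod.val_one, ZMod.val_zero, neg_zero, pow_zero, mul_one, one_mul,
          hcoe_one, C.pw_zero, C.pw_succ, C.hmul_one, C.hone_mul]
      · refine ⟨(0, 0, 0, 0, 0, 0), ?_⟩
        rw [hφc]
        simp only [ZMod.val_zero, neg_zero, pow_zero, mul_one, one_mul,
          hcoe_one, C.pw_zero, C.hmul_one]
      · rintro x y ⟨w1, hw1⟩ ⟨w2, hw2⟩
        exact ⟨fpMul p w1 w2, by rw [hhom, hw1, hw2]⟩
      · rintro x y ⟨w1, hw1⟩ ⟨w2, hw2⟩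
        refine ⟨fpLd p w1 w2, ?_⟩
        have h := hhom w1 (fpLd p w1 w2)
        rw [fpMul_fpLd] at h
        have h2 := congrArg (C.ld (φ w1)) h
        rw [C.hld_mul] at h2
        rw [← h2, hw1, hw2]
    intro q
    have : q ∈ Set.range φ := by rw [hrange]; trivial
    exact this
  -- kernel condition
  refine ⟨φ, hsurjφ, hhom, ?_⟩
  -- independence of ψ a and ψ b
  have hgsurj : Function.Surjective
      (fun c : ZMod p × ZMod p => c.1 • C.psi a + c.2 • C.psi b) := by
    have hSet : {q : Q | ∃ c : ZMod p × ZMod p, c.1 • C.psi a + c.2 • C.psi b = C.psi q}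
        = Set.univ := by
      apply hgen
      · exact ⟨(1, 0), by simp⟩
      · exact ⟨(0, 1), by simp⟩
      · exact ⟨0, by simp [C.psi_one]⟩
      · rintro x y ⟨c, hc⟩ ⟨d, hd⟩
        refine ⟨c + d, ?_⟩
        rw [C.hom, ← hc, ← hd]
        simp only [Prod.fst_add, Prod.snd_add, add_smul]
        abel
      · rintro x y ⟨c, hc⟩ ⟨d, hd⟩
        refine ⟨d - c, ?_⟩
        have hx : C.psi (C.ld x y) = C.psi y - C.psi x := by
          have h := C.hom x (C.ld x y)
          rw [C.hmul_ld] at h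
          rw [h]; abel
        rw [hx, ← hc, ← hd]
        simp only [Prod.fst_sub, Prod.snd_sub, sub_smul]
        abel
    intro t
    obtain ⟨q, hq⟩ := hsurj t
    have hmem : q ∈ {q : Q | ∃ c : ZMod p × ZMod p,
        c.1 • C.psi a + c.2 • C.psi b = C.psi q} := by rw [hSet]; trivial
    obtain ⟨c, hc⟩ := hmem
    exact ⟨c, hc.trans hq⟩
  have hginj : Function.Injective
      (fun c : ZMod p × ZMod p => c.1 • C.psi a + c.2 • C.psi b) :=
    Finite.injective_iff_surjective.mpr hgsurj
  intro u hu
  obtain ⟨u1, u2, u3, u4, u5, u6⟩ := u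
  rw [hφc] at hu
  have h0 := congrArg C.psi hu
  rw [C.psi_one, C.hom, C.hom, C.psi_pw, C.psi_pw,
    (ZA ^ u3.val * ZB ^ u4.val * S ^ (-u5).val * T' ^ (-u6).val : K).2, add_zero] at h0
  have h1 : u1 • C.psi a + u2 • C.psi b = 0 := by
    rw [← h0]
    congr 1
    · rw [← Nat.cast_smul_eq_nsmul (ZMod p), ZMod.natCast_val, ZMod.cast_id]
    · rw [← Nat.cast_smul_eq_nsmul (ZMod p), ZMod.natCast_val, ZMod.cast_id]
  have h2 : (fun c : ZMod p × ZMod p => c.1 • C.psi a + c.2 • C.psi b) (u1, u2)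
      = (fun c : ZMod p × ZMod p => c.1 • C.psi a + c.2 • C.psi b) 0 := by
    simpa using h1
  have h3 := hginj h2
  rw [Prod.ext_iff] at h3
  exact ⟨h3.1, h3.2⟩


/-- Every 2-generated commutative automorphic loop `Q` with a central subloop
`Z ≅ ℤ_p` such that `Q/Z ≅ ℤ_p × ℤ_p` (witnessed by `ψ`) is a quotient of `F_p`
by a central subloop (Theorem 4.2(i)). -/
theorem stmt_14 (p : ℕ) (hp : p.Prime)
    {Q : Type*} (mul : Q → Q → Q) (one : Q) (ld : Q → Q → Q)
    (h_one_mul : ∀ a, mul one a = a)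
    (h_mul_one : ∀ a, mul a one = a)
    (h_comm : ∀ a b, mul a b = mul b a)
    (h_mul_ld : ∀ a b, mul a (ld a b) = b)
    (h_ld_mul : ∀ a b, ld a (mul a b) = b)
    (h_A : ∀ x y a b, ld (mul y x) (mul y (mul x (mul a b))) =
        mul (ld (mul y x) (mul y (mul x a))) (ld (mul y x) (mul y (mul x b))))
    (h_gen : ∃ a b : Q, ∀ S : Set Q, a ∈ S → b ∈ S → one ∈ S →
      (∀ u v, u ∈ S → v ∈ S → mul u v ∈ S) →
      (∀ u v, u ∈ S → v ∈ S → ld u v ∈ S) → S = Set.univ)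
    (ψ : Q → ZMod p × ZMod p)
    (h_ψ_surj : Function.Surjective ψ)
    (h_ψ_hom : ∀ u v, ψ (mul u v) = ψ u + ψ v)
    (h_ker_central : ∀ q : Q, ψ q = 0 →
      (∀ a, mul q a = mul a q) ∧
      (∀ a b, mul (mul q a) b = mul q (mul a b)) ∧
      (∀ a b, mul (mul a q) b = mul a (mul q b)) ∧
      (∀ a b, mul (mul a b) q = mul a (mul b q)))
    (h_ker_card : Set.ncard {q : Q | ψ q = 0} = p) :
    ∃ φ : FpCarrier p → Q,
      Function.Surjective φ ∧
      (∀ u v, φ (fpMul p u v) = mul (φ u) (φ v)) ∧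
      (∀ u : FpCarrier p, φ u = one → u.1 = 0 ∧ u.2.1 = 0) := by
  exact CALCtx.main hp
    { mul := mul, one := one, ld := ld, hone_mul := h_one_mul, hmul_one := h_mul_one,
      comm := h_comm, hmul_ld := h_mul_ld, hld_mul := h_ld_mul, hA := h_A,
      psi := ψ, hom := h_ψ_hom, central := h_ker_central }
    h_gen h_ψ_surj h_ker_card
end

section
/- Let p be a prime and let Q1, Q2 be commutative loops satisfying identity (A). For i = 1, 2, let φi : F_p → Qi be a surjective map with φi(u·v) = φi(u)·φi(v) for all u,v, such that Ni = {u ∈ F_p : φi(u) = 1} is contained in the set of elements of F_p whose first two coordinates are zero. Then there is a multiplication-preserving bijection Q1 → Q2 if and only if there exist α1, α2, β1, β2 ∈ ℤ_p with α1·β2 − α2·β1 ≠ 0 and a multiplication-preserving bijection λ of F_p with λ(1,0,0,0,0,0) = (α1,α2,0,0,0,0) and λ(0,1,0,0,0,0) = (β1,β2,0,0,0,0) such that λ(N1) = N2. -/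
namespace S15

/-- Sum of i(i+1). -/
def T' : ℕ → ℕ := fun k => ∑ i ∈ Finset.range k, i * (i + 1)

lemma T'_succ (k : ℕ) : T' (k + 1) = T' k + k * (k + 1) := Finset.sum_range_succ _ _

lemma T'_add (s t : ℕ) : T' (s + t) = T' s + T' t + s * t * (s + t) := by
  induction t with
  | zero => simp [T']
  | succ t ih =>
    have h1 : s + (t + 1) = (s + t) + 1 := by ring
    rw [h1, T'_succ, ih, T'_succ]
    ring

lemma three_T' (k : ℕ) : 3 * T' k + k = k ^ 3 := by
  induction k with
  | zero => simp [T']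
  | succ k ih =>
    rw [T'_succ]
    have : 3 * (T' k + k * (k + 1)) + (k + 1) = (3 * T' k + k) + 3 * (k * (k + 1)) + 1 := by ring
    rw [this, ih]
    ring

lemma p_dvd_T'_p2 {p : ℕ} (hp : p.Prime) : p ∣ T' (p ^ 2) := by
  by_cases h3 : p = 3
  · subst h3
    decide
  · have hd3 : p ∣ 3 * T' (p ^ 2) := by
      have h := three_T' (p ^ 2)
      have : 3 * T' (p ^ 2) = (p ^ 2) ^ 3 - p ^ 2 := by omega
      rw [this]
      exact Nat.dvd_sub (dvd_pow (dvd_pow_self p two_ne_zero) (by norm_num))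
        (dvd_pow_self p two_ne_zero)
    exact (Nat.Coprime.dvd_of_dvd_mul_left
      ((Nat.coprime_primes hp Nat.prime_three).mpr h3) hd3)

section WithP

variable (p : ℕ) [hp : Fact p.Prime]

instance : NeZero p := ⟨hp.out.ne_zero⟩
instance : NeZero (p ^ 2) := ⟨pow_ne_zero 2 hp.out.ne_zero⟩

lemma one_lt_p : 1 < p := hp.out.one_lt
lemma one_lt_p2 : 1 < p ^ 2 := one_lt_pow₀ hp.out.one_lt (by norm_num)
instance : Fact (1 < p) := ⟨one_lt_p p⟩
instance : Fact (1 < p ^ 2) := ⟨one_lt_p2 p⟩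

/-- Reduction mod p. -/
noncomputable def bar : ZMod (p ^ 2) →+* ZMod p :=
  ZMod.castHom (dvd_pow_self p two_ne_zero) (ZMod p)

lemma bar_eq (x : ZMod (p ^ 2)) : bar p x = ((x.val : ℕ) : ZMod p) := by
  rw [bar, ZMod.castHom_apply, ← ZMod.natCast_val]

/-- The function T on `ZMod (p^2)` with values in `ZMod p`. -/
def Tp : ZMod (p ^ 2) → ZMod p := fun n => ((T' n.val : ℕ) : ZMod p)

lemma T'_mod_p (k j : ℕ) : ((T' (k + p ^ 2 * j) : ℕ) : ZMod p) = ((T' k : ℕ) : ZMod p) := by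
  induction j with
  | zero => simp
  | succ j ih =>
    have h1 : k + p ^ 2 * (j + 1) = (k + p ^ 2 * j) + p ^ 2 := by ring
    rw [h1, T'_add]
    push_cast
    rw [ih]
    have hT : ((T' (p ^ 2) : ℕ) : ZMod p) = 0 := by
      rw [ZMod.natCast_eq_zero_iff]
      exact p_dvd_T'_p2 hp.out
    have hp2 : ((p ^ 2 : ℕ) : ZMod p) = 0 := by
      push_cast
      simp
    push_cast at hT hp2 ⊢
    rw [hT, hp2]
    ring

lemma Tp_add (x y : ZMod (p ^ 2)) :
    Tp p (x + y) = Tp p x + Tp p y + bar p x * bar p y * (bar p x + bar p y) := by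
  have hval : (x + y).val = (x.val + y.val) % p ^ 2 := ZMod.val_add x y
  set s := x.val + y.val with hs
  have hsplit : s % p ^ 2 + p ^ 2 * (s / p ^ 2) = s := Nat.mod_add_div s (p ^ 2)
  have h1 : ((T' s : ℕ) : ZMod p) = ((T' (s % p ^ 2) : ℕ) : ZMod p) := by
    conv_lhs => rw [← hsplit]
    rw [T'_mod_p]
  rw [Tp, hval, ← h1, hs, T'_add, bar_eq, bar_eq]
  show ((T' x.val + T' y.val + x.val * y.val * (x.val + y.val) : ℕ) : ZMod p) = _
  rw [Tp, Tp]
  push_cast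
  ring

end WithP

section WithP2

variable (p : ℕ) [hp : Fact p.Prime]

/-- The model carrier. -/
abbrev GC := ZMod (p ^ 2) × ZMod (p ^ 2) × ZMod p × ZMod p

/-- Multiplication on the model. -/
noncomputable def gMul : GC p → GC p → GC p := fun u v =>
  (u.1 + v.1, u.2.1 + v.2.1,
   u.2.2.1 + v.2.2.1 - bar p u.1 * bar p v.1 * (bar p u.2.1 + bar p v.2.1),
   u.2.2.2 + v.2.2.2 + bar p u.2.1 * bar p v.2.1 * (bar p u.1 + bar p v.1))

/-- From the model to `FpCarrier`. -/
noncomputable def Phi : GC p → FpCarrier p := fun u =>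
  (bar p u.1, bar p u.2.1, ((u.1.val / p : ℕ) : ZMod p), ((u.2.1.val / p : ℕ) : ZMod p),
   u.2.2.1, u.2.2.2)

/-- From `FpCarrier` to the model. -/
def Psi : FpCarrier p → GC p := fun w =>
  (((w.1.val + p * w.2.2.1.val : ℕ) : ZMod (p ^ 2)),
   ((w.2.1.val + p * w.2.2.2.1.val : ℕ) : ZMod (p ^ 2)),
   w.2.2.2.2.1, w.2.2.2.2.2)

lemma val_lt_p2 (a b : ZMod p) : a.val + p * b.val < p ^ 2 := by
  have ha : a.val < p := ZMod.val_lt a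
  have hb : b.val < p := ZMod.val_lt b
  nlinarith

lemma Psi_val1 (w : FpCarrier p) :
    ((((w.1.val + p * w.2.2.1.val : ℕ)) : ZMod (p ^ 2))).val = w.1.val + p * w.2.2.1.val :=
  ZMod.val_cast_of_lt (val_lt_p2 p _ _)

-- carry law for the second "digit"
lemma digit2_add (x y : ZMod (p ^ 2)) :
    (((x + y).val / p : ℕ) : ZMod p) =
      ((x.val / p : ℕ) : ZMod p) + ((y.val / p : ℕ) : ZMod p) + ovf p (bar p x) (bar p y) := by
  have hval : (x + y).val = (x.val + y.val) % p ^ 2 := ZMod.val_add x y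
  set s := x.val + y.val with hs
  have hppos : 0 < p := hp.out.pos
  -- s / p = (s % p^2) / p + p * (s / p^2)
  have hsplit : s % p ^ 2 + (p * (s / p ^ 2)) * p = s := by
    have := Nat.mod_add_div s (p ^ 2)
    nlinarith [this]
  have hdiv : s / p = (s % p ^ 2) / p + p * (s / p ^ 2) := by
    conv_lhs => rw [← hsplit]
    rw [Nat.add_mul_div_right _ _ hppos]
  -- s / p = x/p + y/p + carry
  have hadd : s / p = x.val / p + y.val / p +
      if p ≤ x.val % p + y.val % p then 1 else 0 := Nat.add_div hppos
  have hovf : ovf p (bar p x) (bar p y) =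
      if p ≤ x.val % p + y.val % p then (1 : ZMod p) else 0 := by
    rw [ovf, bar_eq, bar_eq, ZMod.val_natCast, ZMod.val_natCast]
  have hcast : (((s % p ^ 2) / p : ℕ) : ZMod p) = ((s / p : ℕ) : ZMod p) := by
    rw [hdiv]
    push_cast
    simp
  rw [hval, hcast, hadd, hovf]
  push_cast [apply_ite (Nat.cast : ℕ → ZMod p)]
  ring

lemma bar_add (x y : ZMod (p ^ 2)) : bar p (x + y) = bar p x + bar p y := map_add _ _ _

/-- `Phi` is multiplicative. -/
lemma Phi_hom (u v : GC p) : Phi p (gMul p u v) = fpMul p (Phi p u) (Phi p v) := by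
  obtain ⟨n, m, g1, g2⟩ := u
  obtain ⟨n', m', g1', g2'⟩ := v
  simp only [Phi, gMul, fpMul]
  refine Prod.ext ?_ (Prod.ext ?_ (Prod.ext ?_ (Prod.ext ?_ (Prod.ext ?_ ?_)))) <;>
    simp only [map_add]
  · exact digit2_add p n n'
  · exact digit2_add p m m'

lemma Phi_Psi (w : FpCarrier p) : Phi p (Psi p w) = w := by
  obtain ⟨a1, a2, a3, a4, a5, a6⟩ := w
  have key : ∀ a b : ZMod p,
      (bar p (((a.val + p * b.val : ℕ) : ZMod (p ^ 2))) = a) ∧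
      (((((a.val + p * b.val : ℕ) : ZMod (p ^ 2)).val / p : ℕ) : ZMod p) = b) := by
    intro a b
    have hv : (((a.val + p * b.val : ℕ) : ZMod (p ^ 2))).val = a.val + p * b.val :=
      ZMod.val_cast_of_lt (val_lt_p2 p a b)
    constructor
    · rw [bar_eq, hv]
      push_cast
      simp [ZMod.natCast_val, ZMod.cast_id]
    · rw [hv]
      have ha : a.val < p := ZMod.val_lt a
      have : (a.val + p * b.val) / p = b.val := by
        rw [Nat.add_mul_div_left _ _ hp.out.pos, Nat.div_eq_of_lt ha, zero_add]
      rw [this]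
      simp [ZMod.natCast_val, ZMod.cast_id]
  simp only [Phi, Psi]
  exact Prod.ext ((key a1 a3).1) (Prod.ext ((key a2 a4).1)
    (Prod.ext ((key a1 a3).2) (Prod.ext ((key a2 a4).2) rfl)))

lemma Psi_Phi (u : GC p) : Psi p (Phi p u) = u := by
  obtain ⟨n, m, g1, g2⟩ := u
  have key : ∀ x : ZMod (p ^ 2),
      (((bar p x).val + p * (((x.val / p : ℕ) : ZMod p)).val : ℕ) : ZMod (p ^ 2)) = x := by
    intro x
    have h1 : (bar p x).val = x.val % p := by rw [bar_eq, ZMod.val_natCast]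
    have hx : x.val < p ^ 2 := ZMod.val_lt x
    have h2 : (((x.val / p : ℕ) : ZMod p)).val = x.val / p := by
      rw [ZMod.val_natCast, Nat.mod_eq_of_lt]
      have : x.val / p < p := by
        apply Nat.div_lt_of_lt_mul
        nlinarith
      exact this
    rw [h1, h2, Nat.mod_add_div]
    simp [ZMod.natCast_val, ZMod.cast_id]
  simp only [Phi, Psi]
  exact Prod.ext (key n) (Prod.ext (key m) rfl)

end WithP2

section WithP3

variable (p : ℕ) [hp : Fact p.Prime]

lemma Tp_zero : Tp p 0 = 0 := by
  rw [Tp, ZMod.val_zero]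
  simp [T']

lemma Tp_one : Tp p 1 = 0 := by
  rw [Tp, ZMod.val_one]
  simp [T']

/-- The lifted endomorphism of the model determined by the images `x1`, `x2`
of the two generators. -/
noncomputable def lamG (x1 x2 : GC p) : GC p → GC p := fun w =>
  (w.1 * x1.1 + w.2.1 * x2.1, w.1 * x1.2.1 + w.2.1 * x2.2.1,
   bar p w.1 * x1.2.2.1 - Tp p w.1 * ((bar p x1.1) ^ 2 * bar p x1.2.1)
     + bar p w.2.1 * x2.2.2.1 - Tp p w.2.1 * ((bar p x2.1) ^ 2 * bar p x2.2.1)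
     - (bar p w.1 * bar p x1.1) * (bar p w.2.1 * bar p x2.1)
        * (bar p w.1 * bar p x1.2.1 + bar p w.2.1 * bar p x2.2.1)
     + (bar p x1.1 * bar p x2.2.1 - bar p x1.2.1 * bar p x2.1)
        * (bar p x1.1 * w.2.2.1 + bar p x2.1 * w.2.2.2),
   bar p w.1 * x1.2.2.2 + Tp p w.1 * (bar p x1.1 * (bar p x1.2.1) ^ 2)
     + bar p w.2.1 * x2.2.2.2 + Tp p w.2.1 * (bar p x2.1 * (bar p x2.2.1) ^ 2)
     + (bar p w.1 * bar p x1.2.1) * (bar p w.2.1 * bar p x2.2.1)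
        * (bar p w.1 * bar p x1.1 + bar p w.2.1 * bar p x2.1)
     + (bar p x1.1 * bar p x2.2.1 - bar p x1.2.1 * bar p x2.1)
        * (bar p x1.2.1 * w.2.2.1 + bar p x2.2.1 * w.2.2.2))

lemma lamG_hom (x1 x2 : GC p) (u v : GC p) :
    lamG p x1 x2 (gMul p u v) = gMul p (lamG p x1 x2 u) (lamG p x1 x2 v) := by
  obtain ⟨n, m, g1, g2⟩ := u
  obtain ⟨n', m', g1', g2'⟩ := v
  simp only [lamG, gMul]
  refine Prod.ext ?_ (Prod.ext ?_ (Prod.ext ?_ ?_))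
  · ring
  · ring
  · simp only [map_add, map_mul, Tp_add]
    ring
  · simp only [map_add, map_mul, Tp_add]
    ring

lemma lamG_e1 (x1 x2 : GC p) : lamG p x1 x2 (1, 0, 0, 0) = x1 := by
  obtain ⟨A, B, r, s⟩ := x1
  simp only [lamG, Tp_zero, Tp_one, map_one, map_zero]
  refine Prod.ext ?_ (Prod.ext ?_ (Prod.ext ?_ ?_)) <;> ring

lemma lamG_e2 (x1 x2 : GC p) : lamG p x1 x2 (0, 1, 0, 0) = x2 := by
  obtain ⟨C, D, t, uu⟩ := x2
  simp only [lamG, Tp_zero, Tp_one, map_one, map_zero]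
  refine Prod.ext ?_ (Prod.ext ?_ (Prod.ext ?_ ?_)) <;> ring

lemma isUnit_of_bar_ne (x : ZMod (p ^ 2)) (h : bar p x ≠ 0) : IsUnit x := by
  have hx : x = ((x.val : ℕ) : ZMod (p ^ 2)) := (ZMod.natCast_rightInverse x).symm
  rw [hx]
  rw [ZMod.isUnit_iff_coprime]
  apply Nat.Coprime.pow_right
  rw [Nat.coprime_comm]
  apply (Nat.Prime.coprime_iff_not_dvd hp.out).2
  intro hdvd
  apply h
  rw [bar_eq, ZMod.natCast_eq_zero_iff]
  exact hdvd

lemma lamG_injective (x1 x2 : GC p)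
    (hdet : bar p x1.1 * bar p x2.2.1 - bar p x1.2.1 * bar p x2.1 ≠ 0) :
    Function.Injective (lamG p x1 x2) := by
  have hu : IsUnit (x1.1 * x2.2.1 - x1.2.1 * x2.1) := by
    apply isUnit_of_bar_ne
    rw [map_sub, map_mul, map_mul]
    exact hdet
  intro w w' h
  obtain ⟨n, m, g1, g2⟩ := w
  obtain ⟨n', m', g1', g2'⟩ := w'
  simp only [lamG, Prod.mk.injEq] at h
  obtain ⟨h1, h2, h3, h4⟩ := h
  have hn : n = n' := by
    have key : n * (x1.1 * x2.2.1 - x1.2.1 * x2.1) = n' * (x1.1 * x2.2.1 - x1.2.1 * x2.1) := by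
      linear_combination x2.2.1 * h1 - x2.1 * h2
    exact hu.mul_left_cancel (by linear_combination key)
  have hm : m = m' := by
    have key : m * (x1.1 * x2.2.1 - x1.2.1 * x2.1) = m' * (x1.1 * x2.2.1 - x1.2.1 * x2.1) := by
      linear_combination x1.1 * h2 - x1.2.1 * h1
    exact hu.mul_left_cancel (by linear_combination key)
  subst hn; subst hm
  set a := bar p x1.1
  set b := bar p x1.2.1
  set c := bar p x2.1
  set d := bar p x2.2.1
  have e3 : (a * d - b * c) * (a * g1 + c * g2) = (a * d - b * c) * (a * g1' + c * g2') := by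
    linear_combination h3
  have e4 : (a * d - b * c) * (b * g1 + d * g2) = (a * d - b * c) * (b * g1' + d * g2') := by
    linear_combination h4
  have e3' : a * g1 + c * g2 = a * g1' + c * g2' := mul_left_cancel₀ hdet e3
  have e4' : b * g1 + d * g2 = b * g1' + d * g2' := mul_left_cancel₀ hdet e4
  have hg1 : g1 = g1' := by
    have : (a * d - b * c) * g1 = (a * d - b * c) * g1' := by
      linear_combination d * e3' - c * e4'
    exact mul_left_cancel₀ hdet this
  have hg2 : g2 = g2' := by
    have : (a * d - b * c) * g2 = (a * d - b * c) * g2' := by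
      linear_combination a * e4' - b * e3'
    exact mul_left_cancel₀ hdet this
  simp [hg1, hg2]

lemma lamG_bijective (x1 x2 : GC p)
    (hdet : bar p x1.1 * bar p x2.2.1 - bar p x1.2.1 * bar p x2.1 ≠ 0) :
    Function.Bijective (lamG p x1 x2) :=
  Finite.injective_iff_bijective.mp (lamG_injective p x1 x2 hdet)

end WithP3

section WithP4

variable (p : ℕ) [hp : Fact p.Prime]

/-- Left division on `FpCarrier`. -/
def fpLd : FpCarrier p → FpCarrier p → FpCarrier p := fun u w =>
  (w.1 - u.1, w.2.1 - u.2.1,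
   w.2.2.1 - u.2.2.1 - ovf p u.1 (w.1 - u.1),
   w.2.2.2.1 - u.2.2.2.1 - ovf p u.2.1 (w.2.1 - u.2.1),
   w.2.2.2.2.1 - u.2.2.2.2.1 + u.1 * (w.1 - u.1) * w.2.1,
   w.2.2.2.2.2 - u.2.2.2.2.2 - u.2.1 * (w.2.1 - u.2.1) * w.1)

lemma fpMul_fpLd (u w : FpCarrier p) : fpMul p u (fpLd p u w) = w := by
  obtain ⟨u1, u2, u3, u4, u5, u6⟩ := u
  obtain ⟨w1, w2, w3, w4, w5, w6⟩ := w
  simp only [fpLd, fpMul]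
  refine Prod.ext ?_ (Prod.ext ?_ (Prod.ext ?_ (Prod.ext ?_ (Prod.ext ?_ ?_)))) <;> ring

lemma fpLd_fpMul (u v : FpCarrier p) : fpLd p u (fpMul p u v) = v := by
  obtain ⟨u1, u2, u3, u4, u5, u6⟩ := u
  obtain ⟨v1, v2, v3, v4, v5, v6⟩ := v
  simp only [fpLd, fpMul]
  have h1 : u1 + v1 - u1 = v1 := by ring
  have h2 : u2 + v2 - u2 = v2 := by ring
  rw [h1, h2]
  refine Prod.ext ?_ (Prod.ext ?_ (Prod.ext ?_ (Prod.ext ?_ (Prod.ext ?_ ?_)))) <;> ring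

/-- Two multiplicative maps out of the model which agree on the two generators agree
everywhere (the model is generated by the two generators). -/
lemma homs_agree {Q : Type*} (mul : Q → Q → Q)
    (cancel : ∀ a x y, mul a x = mul a y → x = y)
    (f g : GC p → Q)
    (hf : ∀ u v, f (gMul p u v) = mul (f u) (f v))
    (hg : ∀ u v, g (gMul p u v) = mul (g u) (g v))
    (h1 : f (1, 0, 0, 0) = g (1, 0, 0, 0))
    (h2 : f (0, 1, 0, 0) = g (0, 1, 0, 0)) :
    ∀ w, f w = g w := by
  set S : GC p → Prop := fun w => f w = g w with hS
  have mulS : ∀ u v, S u → S v → S (gMul p u v) := by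
    intro u v hu hv
    show f _ = g _
    rw [hf, hg, hu, hv]
  have divS : ∀ u x, S u → S (gMul p u x) → S x := by
    intro u x hu hux
    apply cancel (f u)
    rw [← hf]
    show f _ = _
    rw [hux, hg, hu]
  -- identity element
  have gMul_e1_0 : gMul p (1, 0, 0, 0) (0, 0, 0, 0) = ((1 : ZMod (p ^ 2)), (0 : ZMod (p ^ 2)), (0 : ZMod p), (0 : ZMod p)) := by
    simp only [gMul, map_zero, map_one]
    refine Prod.ext ?_ (Prod.ext ?_ (Prod.ext ?_ ?_)) <;> ring
  have hid : S (0, 0, 0, 0) := divS _ _ h1 (by rw [gMul_e1_0]; exact h1)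
  -- powers of e1
  have hnat1 : ∀ k : ℕ, S ((k : ZMod (p ^ 2)), 0, 0, 0) := by
    intro k
    induction k with
    | zero => exact_mod_cast hid
    | succ k ih =>
      have hmul : gMul p ((k : ZMod (p ^ 2)), 0, 0, 0) (1, 0, 0, 0)
          = (((k : ℕ) + 1 : ZMod (p ^ 2)), 0, 0, 0) := by
        simp only [gMul, map_zero, map_one]
        refine Prod.ext ?_ (Prod.ext ?_ (Prod.ext ?_ ?_)) <;> ring
      have := mulS _ _ ih h1
      rw [hmul] at this
      exact_mod_cast this
  have hall1 : ∀ n : ZMod (p ^ 2), S (n, 0, 0, 0) := by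
    intro n
    have := hnat1 n.val
    rwa [ZMod.natCast_rightInverse n] at this
  have hnat2 : ∀ k : ℕ, S (0, (k : ZMod (p ^ 2)), 0, 0) := by
    intro k
    induction k with
    | zero => exact_mod_cast hid
    | succ k ih =>
      have hmul : gMul p (0, (k : ZMod (p ^ 2)), 0, 0) (0, 1, 0, 0)
          = (0, ((k : ℕ) + 1 : ZMod (p ^ 2)), 0, 0) := by
        simp only [gMul, map_zero, map_one]
        refine Prod.ext ?_ (Prod.ext ?_ (Prod.ext ?_ ?_)) <;> ring
      have := mulS _ _ ih h2
      rw [hmul] at this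
      exact_mod_cast this
  have hall2 : ∀ m : ZMod (p ^ 2), S (0, m, 0, 0) := by
    intro m
    have := hnat2 m.val
    rwa [ZMod.natCast_rightInverse m] at this
  have hpair : ∀ n m : ZMod (p ^ 2), S (n, m, 0, 0) := by
    intro n m
    have hmul : gMul p (n, 0, 0, 0) (0, m, 0, 0) = (n, m, 0, 0) := by
      simp only [gMul, map_zero]
      refine Prod.ext ?_ (Prod.ext ?_ (Prod.ext ?_ ?_)) <;> ring
    have := mulS _ _ (hall1 n) (hall2 m)
    rwa [hmul] at this
  -- the central element z5 = (0,0,1,0)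
  have hz5 : S (0, 0, 1, 0) := by
    have ha : S (gMul p (1, 0, 0, 0) (gMul p (1, 0, 0, 0) (0, 1, 0, 0))) :=
      mulS _ _ h1 (mulS _ _ h1 h2)
    have hcomp : gMul p (1, 0, 0, 0) (gMul p (1, 0, 0, 0) (0, 1, 0, 0))
        = ((2 : ZMod (p ^ 2)), (1 : ZMod (p ^ 2)), (-1 : ZMod p), (0 : ZMod p)) := by
      simp only [gMul, map_zero, map_one, map_add]
      refine Prod.ext ?_ (Prod.ext ?_ (Prod.ext ?_ ?_)) <;> push_cast <;> ring
    rw [hcomp] at ha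
    have hb : S ((2 : ZMod (p ^ 2)), (1 : ZMod (p ^ 2)), (0 : ZMod p), (0 : ZMod p)) :=
      hpair 2 1
    apply divS _ _ ha
    have hmul : gMul p ((2 : ZMod (p ^ 2)), (1 : ZMod (p ^ 2)), (-1 : ZMod p), (0 : ZMod p))
        (0, 0, 1, 0) = ((2 : ZMod (p ^ 2)), (1 : ZMod (p ^ 2)), (0 : ZMod p), (0 : ZMod p)) := by
      simp only [gMul, map_zero]
      refine Prod.ext ?_ (Prod.ext ?_ (Prod.ext ?_ ?_)) <;> ring
    rw [hmul]
    exact hb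
  -- the central element (0,0,0,-1)
  have hz6 : S (0, 0, 0, -1) := by
    have ha : S (gMul p (0, 1, 0, 0) (gMul p (0, 1, 0, 0) (1, 0, 0, 0))) :=
      mulS _ _ h2 (mulS _ _ h2 h1)
    have hcomp : gMul p (0, 1, 0, 0) (gMul p (0, 1, 0, 0) (1, 0, 0, 0))
        = ((1 : ZMod (p ^ 2)), (2 : ZMod (p ^ 2)), (0 : ZMod p), (1 : ZMod p)) := by
      simp only [gMul, map_zero, map_one, map_add]
      refine Prod.ext ?_ (Prod.ext ?_ (Prod.ext ?_ ?_)) <;> push_cast <;> ring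
    rw [hcomp] at ha
    have hb : S ((1 : ZMod (p ^ 2)), (2 : ZMod (p ^ 2)), (0 : ZMod p), (0 : ZMod p)) :=
      hpair 1 2
    apply divS _ _ ha
    have hmul : gMul p ((1 : ZMod (p ^ 2)), (2 : ZMod (p ^ 2)), (0 : ZMod p), (1 : ZMod p))
        (0, 0, 0, -1) = ((1 : ZMod (p ^ 2)), (2 : ZMod (p ^ 2)), (0 : ZMod p), (0 : ZMod p)) := by
      simp only [gMul, map_zero]
      refine Prod.ext ?_ (Prod.ext ?_ (Prod.ext ?_ ?_)) <;> ring
    rw [hmul]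
    exact hb
  -- all central elements (0,0,g1,0)
  have hc5 : ∀ g1 : ZMod p, S (0, 0, g1, 0) := by
    have hstep : ∀ k : ℕ, S (0, 0, (k : ZMod p), 0) := by
      intro k
      induction k with
      | zero => exact_mod_cast hid
      | succ k ih =>
        have hmul : gMul p (0, 0, (k : ZMod p), 0) (0, 0, 1, 0)
            = (0, 0, ((k : ℕ) + 1 : ZMod p), 0) := by
          simp only [gMul, map_zero]
          refine Prod.ext ?_ (Prod.ext ?_ (Prod.ext ?_ ?_)) <;> push_cast <;> ring
        have := mulS _ _ ih hz5
        rw [hmul] at this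
        exact_mod_cast this
    intro g1
    have := hstep g1.val
    rwa [ZMod.natCast_rightInverse g1] at this
  have hc6 : ∀ g2 : ZMod p, S (0, 0, 0, g2) := by
    have hstep : ∀ k : ℕ, S (0, 0, 0, (-(k : ZMod p))) := by
      intro k
      induction k with
      | zero => simpa using hid
      | succ k ih =>
        have hmul : gMul p (0, 0, 0, -(k : ZMod p)) (0, 0, 0, -1)
            = (0, 0, 0, (-((k : ℕ) + 1 : ZMod p))) := by
          simp only [gMul, map_zero]
          refine Prod.ext ?_ (Prod.ext ?_ (Prod.ext ?_ ?_)) <;> push_cast <;> ring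
        have := mulS _ _ ih hz6
        rw [hmul] at this
        exact_mod_cast this
    intro g2
    have := hstep (-g2).val
    rw [ZMod.natCast_rightInverse (-g2)] at this
    simpa using this
  -- assemble
  intro w
  obtain ⟨n, m, g1, g2⟩ := w
  have hmul1 : gMul p (n, m, 0, 0) (0, 0, g1, 0) = (n, m, g1, 0) := by
    simp only [gMul, map_zero]
    refine Prod.ext ?_ (Prod.ext ?_ (Prod.ext ?_ ?_)) <;> ring
  have hmul2 : gMul p (n, m, g1, 0) (0, 0, 0, g2) = (n, m, g1, g2) := by
    simp only [gMul, map_zero]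
    refine Prod.ext ?_ (Prod.ext ?_ (Prod.ext ?_ ?_)) <;> ring
  have s1 : S (n, m, g1, 0) := by
    have := mulS _ _ (hpair n m) (hc5 g1)
    rwa [hmul1] at this
  have := mulS _ _ s1 (hc6 g2)
  rwa [hmul2] at this

end WithP4

section WithP5

variable (p : ℕ) [hp : Fact p.Prime]

lemma fpMul_fst (u v : FpCarrier p) : (fpMul p u v).1 = u.1 + v.1 := by
  obtain ⟨u1, u2, u3, u4, u5, u6⟩ := u; obtain ⟨v1, v2, v3, v4, v5, v6⟩ := v; rfl

lemma fpMul_snd (u v : FpCarrier p) : (fpMul p u v).2.1 = u.2.1 + v.2.1 := by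
  obtain ⟨u1, u2, u3, u4, u5, u6⟩ := u; obtain ⟨v1, v2, v3, v4, v5, v6⟩ := v; rfl

/-- The central correction automorphism. -/
def muC (e3 f3 e4 f4 e5 f5 e6 f6 : ZMod p) : FpCarrier p → FpCarrier p := fun w =>
  (w.1, w.2.1,
   w.2.2.1 + e3 * w.1 + f3 * w.2.1,
   w.2.2.2.1 + e4 * w.1 + f4 * w.2.1,
   w.2.2.2.2.1 + e5 * w.1 + f5 * w.2.1,
   w.2.2.2.2.2 + e6 * w.1 + f6 * w.2.1)

lemma muC_hom (e3 f3 e4 f4 e5 f5 e6 f6 : ZMod p) (u v : FpCarrier p) :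
    muC p e3 f3 e4 f4 e5 f5 e6 f6 (fpMul p u v)
      = fpMul p (muC p e3 f3 e4 f4 e5 f5 e6 f6 u) (muC p e3 f3 e4 f4 e5 f5 e6 f6 v) := by
  obtain ⟨u1, u2, u3, u4, u5, u6⟩ := u
  obtain ⟨v1, v2, v3, v4, v5, v6⟩ := v
  simp only [muC, fpMul]
  refine Prod.ext ?_ (Prod.ext ?_ (Prod.ext ?_ (Prod.ext ?_ (Prod.ext ?_ ?_)))) <;> ring

lemma muC_bijective (e3 f3 e4 f4 e5 f5 e6 f6 : ZMod p) :
    Function.Bijective (muC p e3 f3 e4 f4 e5 f5 e6 f6) := by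
  rw [Function.bijective_iff_has_inverse]
  refine ⟨muC p (-e3) (-f3) (-e4) (-f4) (-e5) (-f5) (-e6) (-f6), fun w => ?_, fun w => ?_⟩ <;>
  · obtain ⟨w1, w2, w3, w4, w5, w6⟩ := w
    simp only [muC]
    refine Prod.ext ?_ (Prod.ext ?_ (Prod.ext ?_ (Prod.ext ?_ (Prod.ext ?_ ?_)))) <;> ring

lemma muC_central (e3 f3 e4 f4 e5 f5 e6 f6 : ZMod p) (w : FpCarrier p)
    (h1 : w.1 = 0) (h2 : w.2.1 = 0) : muC p e3 f3 e4 f4 e5 f5 e6 f6 w = w := by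
  obtain ⟨w1, w2, w3, w4, w5, w6⟩ := w
  simp only [muC]
  simp only at h1 h2
  subst h1; subst h2
  refine Prod.ext ?_ (Prod.ext ?_ (Prod.ext ?_ (Prod.ext ?_ (Prod.ext ?_ ?_)))) <;> ring

lemma bar_Psi (a b : ZMod p) : bar p (((a.val + p * b.val : ℕ) : ZMod (p ^ 2))) = a := by
  rw [bar_eq, ZMod.val_cast_of_lt (val_lt_p2 p a b)]
  push_cast
  simp [ZMod.natCast_val, ZMod.cast_id]

lemma Psi_e1 : Psi p ((1 : ZMod p), 0, 0, 0, 0, 0) = ((1 : ZMod (p ^ 2)), 0, 0, 0) := by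
  simp only [Psi]
  rw [ZMod.val_one, ZMod.val_zero]
  norm_num

lemma Psi_e2 : Psi p ((0 : ZMod p), 1, 0, 0, 0, 0) = ((0 : ZMod (p ^ 2)), 1, 0, 0) := by
  simp only [Psi]
  rw [ZMod.val_one, ZMod.val_zero]
  norm_num

lemma Phi_e1 : Phi p ((1 : ZMod (p ^ 2)), 0, 0, 0) = ((1 : ZMod p), 0, 0, 0, 0, 0) := by
  simp only [Phi]
  rw [map_one, map_zero, ZMod.val_one, ZMod.val_zero]
  rw [Nat.div_eq_of_lt (one_lt_p p), Nat.zero_div]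
  norm_num

lemma Phi_e2 : Phi p ((0 : ZMod (p ^ 2)), 1, 0, 0) = ((0 : ZMod p), 1, 0, 0, 0, 0) := by
  simp only [Phi]
  rw [map_one, map_zero, ZMod.val_one, ZMod.val_zero]
  rw [Nat.div_eq_of_lt (one_lt_p p), Nat.zero_div]
  norm_num

lemma Phi_bijective : Function.Bijective (Phi p) := by
  rw [Function.bijective_iff_has_inverse]
  exact ⟨Psi p, Psi_Phi p, Phi_Psi p⟩

lemma Psi_bijective : Function.Bijective (Psi p) := by
  rw [Function.bijective_iff_has_inverse]
  exact ⟨Phi p, Phi_Psi p, Psi_Phi p⟩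

lemma Psi_hom (u v : FpCarrier p) : Psi p (fpMul p u v) = gMul p (Psi p u) (Psi p v) := by
  have h := Phi_hom p (Psi p u) (Psi p v)
  rw [Phi_Psi, Phi_Psi] at h
  rw [← h, Psi_Phi]

end WithP5

end S15

/-- Theorem 4.2(ii): two quotients of `F_p` by central "subloops" `N1`, `N2`
(given as kernels of epimorphisms `φ1`, `φ2`) are isomorphic if and only if some
automorphism of `F_p` induced by an element of `GL_2(p)` maps `N1` onto `N2`. -/
theorem stmt_15 (p : ℕ) (hp : p.Prime)
    {Q1 Q2 : Type*}
    (mul1 : Q1 → Q1 → Q1) (one1 : Q1) (ld1 : Q1 → Q1 → Q1)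
    (h_one_mul1 : ∀ a, mul1 one1 a = a)
    (h_mul_one1 : ∀ a, mul1 a one1 = a)
    (h_comm1 : ∀ a b, mul1 a b = mul1 b a)
    (h_mul_ld1 : ∀ a b, mul1 a (ld1 a b) = b)
    (h_ld_mul1 : ∀ a b, ld1 a (mul1 a b) = b)
    (h_A1 : ∀ x y a b, ld1 (mul1 y x) (mul1 y (mul1 x (mul1 a b))) =
        mul1 (ld1 (mul1 y x) (mul1 y (mul1 x a))) (ld1 (mul1 y x) (mul1 y (mul1 x b))))
    (mul2 : Q2 → Q2 → Q2) (one2 : Q2) (ld2 : Q2 → Q2 → Q2)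
    (h_one_mul2 : ∀ a, mul2 one2 a = a)
    (h_mul_one2 : ∀ a, mul2 a one2 = a)
    (h_comm2 : ∀ a b, mul2 a b = mul2 b a)
    (h_mul_ld2 : ∀ a b, mul2 a (ld2 a b) = b)
    (h_ld_mul2 : ∀ a b, ld2 a (mul2 a b) = b)
    (h_A2 : ∀ x y a b, ld2 (mul2 y x) (mul2 y (mul2 x (mul2 a b))) =
        mul2 (ld2 (mul2 y x) (mul2 y (mul2 x a))) (ld2 (mul2 y x) (mul2 y (mul2 x b))))
    (φ1 : FpCarrier p → Q1)
    (h_φ1_surj : Function.Surjective φ1)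
    (h_φ1_hom : ∀ u v, φ1 (fpMul p u v) = mul1 (φ1 u) (φ1 v))
    (h_N1 : ∀ u : FpCarrier p, φ1 u = one1 → u.1 = 0 ∧ u.2.1 = 0)
    (φ2 : FpCarrier p → Q2)
    (h_φ2_surj : Function.Surjective φ2)
    (h_φ2_hom : ∀ u v, φ2 (fpMul p u v) = mul2 (φ2 u) (φ2 v))
    (h_N2 : ∀ u : FpCarrier p, φ2 u = one2 → u.1 = 0 ∧ u.2.1 = 0) :
    (∃ κ : Q1 → Q2, Function.Bijective κ ∧ ∀ a b, κ (mul1 a b) = mul2 (κ a) (κ b)) ↔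
    (∃ α1 α2 β1 β2 : ZMod p, α1 * β2 - α2 * β1 ≠ 0 ∧
      ∃ lam : FpCarrier p → FpCarrier p,
        Function.Bijective lam ∧
        (∀ u v, lam (fpMul p u v) = fpMul p (lam u) (lam v)) ∧
        lam (1, 0, 0, 0, 0, 0) = (α1, α2, 0, 0, 0, 0) ∧
        lam (0, 1, 0, 0, 0, 0) = (β1, β2, 0, 0, 0, 0) ∧
        lam '' {u : FpCarrier p | φ1 u = one1} = {u : FpCarrier p | φ2 u = one2}) := by
  haveI : Fact p.Prime := ⟨hp⟩
  have cancel2 : ∀ a x y : Q2, mul2 a x = mul2 a y → x = y := fun a x y h => by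
    rw [← h_ld_mul2 a x, h, h_ld_mul2]
  constructor
  · -- forward direction
    rintro ⟨κ, ⟨hκinj, hκsurj⟩, hκmul⟩
    have hone : κ one1 = one2 := by
      have h1 : mul2 (κ one1) (κ one1) = κ one1 := by rw [← hκmul, h_mul_one1]
      have h2 : mul2 (κ one1) one2 = κ one1 := h_mul_one2 _
      exact cancel2 _ _ _ (h1.trans h2.symm)
    set ψ : FpCarrier p → Q2 := fun u => κ (φ1 u) with hψ
    have hψ_hom : ∀ u v, ψ (fpMul p u v) = mul2 (ψ u) (ψ v) := by
      intro u v
      show κ (φ1 _) = _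
      rw [h_φ1_hom, hκmul]
    have hψ_surj : Function.Surjective ψ := hκsurj.comp h_φ1_surj
    have hψ_ker : ∀ u, ψ u = one2 ↔ φ1 u = one1 := by
      intro u
      constructor
      · intro h
        exact hκinj (h.trans hone.symm)
      · intro h
        show κ (φ1 u) = one2
        rw [h, hone]
    obtain ⟨x1, hx1⟩ := h_φ2_surj (ψ ((1 : ZMod p), 0, 0, 0, 0, 0))
    obtain ⟨x2, hx2⟩ := h_φ2_surj (ψ ((0 : ZMod p), 1, 0, 0, 0, 0))
    set y1 := S15.Psi p x1 with hy1
    set y2 := S15.Psi p x2 with hy2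
    obtain ⟨a1, a2, a3, a4, a5, a6⟩ := x1
    obtain ⟨b1, b2, b3, b4, b5, b6⟩ := x2
    have hbar1 : S15.bar p y1.1 = a1 := S15.bar_Psi p a1 a3
    have hbar2 : S15.bar p y1.2.1 = a2 := S15.bar_Psi p a2 a4
    have hbar3 : S15.bar p y2.1 = b1 := S15.bar_Psi p b1 b3
    have hbar4 : S15.bar p y2.2.1 = b2 := S15.bar_Psi p b2 b4
    set lamF : FpCarrier p → FpCarrier p :=
      fun w => S15.Phi p (S15.lamG p y1 y2 (S15.Psi p w)) with hlamF
    have hlamF_hom : ∀ u v, lamF (fpMul p u v) = fpMul p (lamF u) (lamF v) := by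
      intro u v
      show S15.Phi p (S15.lamG p y1 y2 (S15.Psi p (fpMul p u v))) = _
      rw [S15.Psi_hom, S15.lamG_hom, S15.Phi_hom]
    -- agreement of φ2 ∘ lamF with ψ
    have agree : ∀ w, φ2 (lamF w) = ψ w := by
      have main := S15.homs_agree p mul2 cancel2
        (fun u => φ2 (S15.Phi p (S15.lamG p y1 y2 u)))
        (fun u => ψ (S15.Phi p u))
        (by intro u v; rw [S15.lamG_hom, S15.Phi_hom, h_φ2_hom])
        (by intro u v; rw [S15.Phi_hom, hψ_hom])
        (by
          rw [S15.lamG_e1, hy1, S15.Phi_Psi, S15.Phi_e1]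
          exact hx1)
        (by
          rw [S15.lamG_e2, hy2, S15.Phi_Psi, S15.Phi_e2]
          exact hx2)
      intro w
      have := main (S15.Psi p w)
      rwa [S15.Phi_Psi] at this
    -- the first two coordinates are in the image of the matrix
    have htop : ∀ w : FpCarrier p, ∃ ν μ : ZMod p,
        w.1 = ν * a1 + μ * b1 ∧ w.2.1 = ν * a2 + μ * b2 := by
      intro w
      obtain ⟨v, hv⟩ := hψ_surj (φ2 w)
      have heq : φ2 (lamF v) = φ2 w := (agree v).trans hv
      set n := S15.fpLd p (lamF v) w with hn
      have hmuln : fpMul p (lamF v) n = w := S15.fpMul_fpLd p _ _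
      have hφn : φ2 n = one2 := by
        apply cancel2 (φ2 (lamF v))
        rw [← h_φ2_hom, hmuln, heq, h_mul_one2]
      obtain ⟨hn1, hn2⟩ := h_N2 n hφn
      have hw1 : w.1 = (lamF v).1 := by
        rw [← hmuln, S15.fpMul_fst, hn1, add_zero]
      have hw2 : w.2.1 = (lamF v).2.1 := by
        rw [← hmuln, S15.fpMul_snd, hn2, add_zero]
      refine ⟨S15.bar p (S15.Psi p v).1, S15.bar p (S15.Psi p v).2.1, ?_, ?_⟩
      · rw [hw1]
        show S15.bar p ((S15.Psi p v).1 * y1.1 + (S15.Psi p v).2.1 * y2.1) = _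
        rw [map_add, map_mul, map_mul, hbar1, hbar3]
      · rw [hw2]
        show S15.bar p ((S15.Psi p v).1 * y1.2.1 + (S15.Psi p v).2.1 * y2.2.1) = _
        rw [map_add, map_mul, map_mul, hbar2, hbar4]
    -- the determinant is nonzero
    have hdet : a1 * b2 - a2 * b1 ≠ 0 := by
      intro hdet0
      obtain ⟨ν, μ, E1, E2⟩ := htop ((1 : ZMod p), 0, 0, 0, 0, 0)
      obtain ⟨ν', μ', E3, E4⟩ := htop ((0 : ZMod p), 1, 0, 0, 0, 0)
      simp only at E1 E2 E3 E4
      have key : (ν * a1 + μ * b1) * (ν' * a2 + μ' * b2)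
          - (ν * a2 + μ * b2) * (ν' * a1 + μ' * b1)
          = (ν * μ' - μ * ν') * (a1 * b2 - a2 * b1) := by ring
      rw [← E1, ← E2, ← E3, ← E4, hdet0, mul_zero] at key
      simp at key
    have hdet' : S15.bar p y1.1 * S15.bar p y2.2.1 - S15.bar p y1.2.1 * S15.bar p y2.1 ≠ 0 := by
      rw [hbar1, hbar2, hbar3, hbar4]
      exact hdet
    have hlamF_bij : Function.Bijective lamF := by
      have : lamF = (S15.Phi p) ∘ (S15.lamG p y1 y2) ∘ (S15.Psi p) := rfl
      rw [this]
      exact (S15.Phi_bijective p).comp ((S15.lamG_bijective p y1 y2 hdet').comp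
        (S15.Psi_bijective p))
    have hlamF_e1 : lamF ((1 : ZMod p), 0, 0, 0, 0, 0) = (a1, a2, a3, a4, a5, a6) := by
      show S15.Phi p (S15.lamG p y1 y2 (S15.Psi p _)) = _
      rw [S15.Psi_e1, S15.lamG_e1, hy1, S15.Phi_Psi]
    have hlamF_e2 : lamF ((0 : ZMod p), 1, 0, 0, 0, 0) = (b1, b2, b3, b4, b5, b6) := by
      show S15.Phi p (S15.lamG p y1 y2 (S15.Psi p _)) = _
      rw [S15.Psi_e2, S15.lamG_e2, hy2, S15.Phi_Psi]
    -- central correction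
    set dinv := (a1 * b2 - a2 * b1)⁻¹ with hdinv
    have hinv : (a1 * b2 - a2 * b1) * dinv = 1 := mul_inv_cancel₀ hdet
    set E3' := dinv * (b3 * a2 - a3 * b2) with hE3
    set F3' := dinv * (a3 * b1 - b3 * a1) with hF3
    set E4' := dinv * (b4 * a2 - a4 * b2) with hE4
    set F4' := dinv * (a4 * b1 - b4 * a1) with hF4
    set E5' := dinv * (b5 * a2 - a5 * b2) with hE5
    set F5' := dinv * (a5 * b1 - b5 * a1) with hF5
    set E6' := dinv * (b6 * a2 - a6 * b2) with hE6
    set F6' := dinv * (a6 * b1 - b6 * a1) with hF6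
    set lam : FpCarrier p → FpCarrier p :=
      fun w => S15.muC p E3' F3' E4' F4' E5' F5' E6' F6' (lamF w) with hlam
    refine ⟨a1, a2, b1, b2, hdet, lam, ?_, ?_, ?_, ?_, ?_⟩
    · exact (S15.muC_bijective p _ _ _ _ _ _ _ _).comp hlamF_bij
    · intro u v
      show S15.muC p _ _ _ _ _ _ _ _ (lamF (fpMul p u v)) = _
      rw [hlamF_hom, S15.muC_hom]
    · show S15.muC p _ _ _ _ _ _ _ _ (lamF _) = _
      rw [hlamF_e1]
      simp only [S15.muC]
      refine Prod.ext rfl (Prod.ext rfl (Prod.ext ?_ (Prod.ext ?_ (Prod.ext ?_ ?_))))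
      · show a3 + E3' * a1 + F3' * a2 = (0 : ZMod p)
        simp only [hE3, hF3]
        linear_combination (-a3) * hinv
      · show a4 + E4' * a1 + F4' * a2 = (0 : ZMod p)
        simp only [hE4, hF4]
        linear_combination (-a4) * hinv
      · show a5 + E5' * a1 + F5' * a2 = (0 : ZMod p)
        simp only [hE5, hF5]
        linear_combination (-a5) * hinv
      · show a6 + E6' * a1 + F6' * a2 = (0 : ZMod p)
        simp only [hE6, hF6]
        linear_combination (-a6) * hinv
    · show S15.muC p _ _ _ _ _ _ _ _ (lamF _) = _
      rw [hlamF_e2]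
      simp only [S15.muC]
      refine Prod.ext rfl (Prod.ext rfl (Prod.ext ?_ (Prod.ext ?_ (Prod.ext ?_ ?_))))
      · show b3 + E3' * b1 + F3' * b2 = (0 : ZMod p)
        simp only [hE3, hF3]
        linear_combination (-b3) * hinv
      · show b4 + E4' * b1 + F4' * b2 = (0 : ZMod p)
        simp only [hE4, hF4]
        linear_combination (-b4) * hinv
      · show b5 + E5' * b1 + F5' * b2 = (0 : ZMod p)
        simp only [hE5, hF5]
        linear_combination (-b5) * hinv
      · show b6 + E6' * b1 + F6' * b2 = (0 : ZMod p)
        simp only [hE6, hF6]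
        linear_combination (-b6) * hinv
    · -- image of the kernel
      ext w
      simp only [Set.mem_image, Set.mem_setOf_eq]
      constructor
      · rintro ⟨u, hu, rfl⟩
        have hker : φ2 (lamF u) = one2 := by
          rw [agree]
          exact (hψ_ker u).mpr hu
        obtain ⟨hz1, hz2⟩ := h_N2 _ hker
        show φ2 (S15.muC p _ _ _ _ _ _ _ _ (lamF u)) = one2
        rw [S15.muC_central p _ _ _ _ _ _ _ _ _ hz1 hz2]
        exact hker
      · intro hw
        obtain ⟨u, hu⟩ := ((S15.muC_bijective p E3' F3' E4' F4' E5' F5' E6' F6').comp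
          hlamF_bij).2 w
        obtain ⟨hz1, hz2⟩ := h_N2 w hw
        have hfix : S15.muC p E3' F3' E4' F4' E5' F5' E6' F6' (lamF u) = lamF u := by
          apply S15.muC_central
          · have : w.1 = (lamF u).1 := by rw [← hu]; rfl
            rw [← this]; exact hz1
          · have : w.2.1 = (lamF u).2.1 := by rw [← hu]; rfl
            rw [← this]; exact hz2
        have hwl : w = lamF u := by rw [← hu]; exact hfix
        refine ⟨u, ?_, hu⟩
        apply (hψ_ker u).mp
        rw [← agree, ← hwl]
        exact hw
  · -- reverse direction
    rintro ⟨α1, α2, β1, β2, hdet, lam, hlbij, hlhom, hle1, hle2, hlN⟩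
    have h_φ1_surj' := h_φ1_surj
    choose sec hsec using h_φ1_surj'
    have welldef : ∀ u v, φ1 u = φ1 v → φ2 (lam u) = φ2 (lam v) := by
      intro u v h
      set n := S15.fpLd p u v with hn
      have hmuln : fpMul p u n = v := S15.fpMul_fpLd p _ _
      have hφn : φ1 n = one1 := by
        have h1 : mul1 (φ1 u) (φ1 n) = φ1 v := by rw [← h_φ1_hom, hmuln]
        have h2 : mul1 (φ1 u) one1 = φ1 v := by rw [h_mul_one1, h]
        rw [← h_ld_mul1 (φ1 u) (φ1 n), h1, ← h2, h_ld_mul1]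
      have hmem : φ2 (lam n) = one2 := by
        have : lam n ∈ {u : FpCarrier p | φ2 u = one2} := by
          rw [← hlN]
          exact ⟨n, hφn, rfl⟩
        exact this
      have hcalc : φ2 (lam v) = φ2 (lam u) := by
        calc φ2 (lam v) = φ2 (lam (fpMul p u n)) := by rw [hmuln]
          _ = mul2 (φ2 (lam u)) (φ2 (lam n)) := by rw [hlhom, h_φ2_hom]
          _ = mul2 (φ2 (lam u)) one2 := by rw [hmem]
          _ = φ2 (lam u) := h_mul_one2 _
      exact hcalc.symm
    set κ : Q1 → Q2 := fun q => φ2 (lam (sec q)) with hκ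
    have hκφ : ∀ u, κ (φ1 u) = φ2 (lam u) := by
      intro u
      exact welldef _ _ (hsec (φ1 u))
    refine ⟨κ, ⟨?_, ?_⟩, ?_⟩
    · intro q q' h
      obtain ⟨u, rfl⟩ := h_φ1_surj q
      obtain ⟨v, rfl⟩ := h_φ1_surj q'
      rw [hκφ, hκφ] at h
      set n := S15.fpLd p (lam u) (lam v) with hn
      have hmuln : fpMul p (lam u) n = lam v := S15.fpMul_fpLd p _ _
      have hφn : φ2 n = one2 := by
        have h1 : mul2 (φ2 (lam u)) (φ2 n) = φ2 (lam v) := by rw [← h_φ2_hom, hmuln]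
        have h2 : mul2 (φ2 (lam u)) one2 = φ2 (lam v) := by rw [h_mul_one2, h]
        rw [← h_ld_mul2 (φ2 (lam u)) (φ2 n), h1, ← h2, h_ld_mul2]
      have : n ∈ lam '' {u : FpCarrier p | φ1 u = one1} := by rw [hlN]; exact hφn
      obtain ⟨n1, hn1, hn1e⟩ := this
      have heq : lam (fpMul p u n1) = lam v := by rw [hlhom, hn1e, hmuln]
      have hv : fpMul p u n1 = v := hlbij.1 heq
      rw [← hv, h_φ1_hom, hn1, h_mul_one1]
    · intro q2
      obtain ⟨w, hw⟩ := h_φ2_surj q2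
      obtain ⟨u, hu⟩ := hlbij.2 w
      exact ⟨φ1 u, by rw [hκφ, hu, hw]⟩
    · intro a b
      obtain ⟨u, rfl⟩ := h_φ1_surj a
      obtain ⟨v, rfl⟩ := h_φ1_surj b
      rw [← h_φ1_hom, hκφ, hκφ, hκφ, hlhom, h_φ2_hom]
end

section
/- Let p be a prime with p ≠ 3. For g = (α1, α2; β1, β2) an invertible 2×2 matrix over ℤ_p with determinant d, let M(g) be the linear automorphism of (ℤ_p)⁴ (standard basis e1, e2, e3, e4) with M(g)e1 = α1·e1 + α2·e2, M(g)e2 = β1·e1 + β2·e2, M(g)e3 = d·(α1·e3 + α2·e4), M(g)e4 = d·(β1·e3 + β2·e4). Fix a non-square λ ∈ ℤ_p (if p ≠ 2), and set N1 = span{e1, e3, e4}, N2 = span{e1, e2, e3}, N3 = span{e1, e2 + e4, e3}, N4 = span{e2, e1 + e4, e3}, N5 = span{e2, λ·e1 + e4, e3}. Then every 3-dimensional subspace N of (ℤ_p)⁴ satisfies N = M(g)(N_i) for some invertible g and exactly one index i ∈ {1,2,3,4,5} (with i = 5 excluded when p = 2). -/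
/-- The matrix of the linear automorphism `M(g)` of `(ℤ_p)⁴` (for `p ≠ 3`) induced by
`g = (α1, α2; β1, β2) ∈ GL_2(p)` with `d = det g`: `e1 ↦ α1e1+α2e2`, `e2 ↦ β1e1+β2e2`,
`e3 ↦ d(α1e3+α2e4)`, `e4 ↦ d(β1e3+β2e4)`. -/
def glAct (p : ℕ) (α1 α2 β1 β2 : ZMod p) : Matrix (Fin 4) (Fin 4) (ZMod p) :=
  !![α1, β1, 0, 0;
     α2, β2, 0, 0;
     0, 0, (α1 * β2 - α2 * β1) * α1, (α1 * β2 - α2 * β1) * β1;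
     0, 0, (α1 * β2 - α2 * β1) * α2, (α1 * β2 - α2 * β1) * β2]

/-- The five representative subspaces `N1, …, N5` of `(ℤ_p)⁴` (for `p ≠ 3`),
depending on a fixed non-square `lam`. -/
def reps (p : ℕ) (lam : ZMod p) : Fin 5 → Submodule (ZMod p) (Fin 4 → ZMod p) :=
  ![Submodule.span (ZMod p) {Pi.single 0 1, Pi.single 2 1, Pi.single 3 1},
    Submodule.span (ZMod p) {Pi.single 0 1, Pi.single 1 1, Pi.single 2 1},
    Submodule.span (ZMod p) {Pi.single 0 1, Pi.single 1 1 + Pi.single 3 1, Pi.single 2 1},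
    Submodule.span (ZMod p) {Pi.single 1 1, Pi.single 0 1 + Pi.single 3 1, Pi.single 2 1},
    Submodule.span (ZMod p)
      {Pi.single 1 1, lam • (Pi.single 0 1 : Fin 4 → ZMod p) + Pi.single 3 1, Pi.single 2 1}]

/-!
A hyperplane `N` of `(ℤ_p)⁴` is the kernel of a row vector `r = (u, v)`, `u, v ∈ (ℤ_p)²`, unique up
to a nonzero scalar, and `M(g)⁻¹ N` is the kernel of `r M(g) = (g u, d · g v)`, with `g` acting on
columns. So the orbits of hyperplanes are the orbits of the lines `ℤ_p r`, and these are told apart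
by whether `v = 0`, whether `u = 0`, and the class of `disc r = -det (u, v)` modulo nonzero squares,
since `disc (s • r M(g)) = (s d)² · disc r`. Modulo squares there are three classes (zero, nonzero
squares, non-squares; the last is empty for `p = 2`), and the normal vectors of `N₁, …, N₅`
represent the five resulting orbits.
-/

open Matrix Module LinearMap

theorem comap_toLin'_ker_dotProductEquiv {R ι : Type*} [CommRing R] [Fintype ι] [DecidableEq ι]
    (A : Matrix ι ι R) (r : ι → R) :
    (ker (dotProductEquiv R ι r)).comap (toLin' A) = ker (dotProductEquiv R ι (r ᵥ* A)) := by
  ext x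
  simp [dotProduct_mulVec]

section LinearAlgebra

variable {K V : Type*} [Field K] [AddCommGroup V] [Module K V]

theorem Module.Dual.exists_eq_smul_of_ker_le {f g : Dual K V} (h : ker f ≤ ker g) :
    ∃ c : K, g = c • f := by
  have hg := mem_span_of_iInf_ker_le_ker (L := fun _ : Unit => f) (by simpa using h)
  obtain ⟨c, hc⟩ := Submodule.mem_span_singleton.mp (by simpa using hg)
  exact ⟨c, hc.symm⟩

theorem Submodule.exists_dual_ker_eq_of_finrank_add_one_eq [FiniteDimensional K V]
    {N : Submodule K V} (hN : finrank K N + 1 = finrank K V) :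
    ∃ f : Dual K V, f ≠ 0 ∧ ker f = N := by
  have hlt : N < ⊤ := by
    refine lt_top_iff_ne_top.mpr fun htop => ?_
    rw [htop, finrank_top] at hN
    omega
  obtain ⟨f, hf, hmap⟩ := Submodule.exists_dual_map_eq_bot_of_lt_top hlt inferInstance
  have hle : N ≤ ker f := le_ker_iff_map.mpr hmap
  have hrange : finrank K (range f) ≠ 0 := fun h0 =>
    hf (range_eq_bot.mp (Submodule.finrank_eq_zero.mp h0))
  have := finrank_range_add_finrank_ker f
  exact ⟨f, hf, (Submodule.eq_of_le_of_finrank_le hle (by omega)).symm⟩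

variable {ι : Type*} [Fintype ι] [DecidableEq ι]

theorem exists_eq_smul_of_ker_dotProductEquiv_eq {r w : ι → K}
    (h : ker (dotProductEquiv K ι r) = ker (dotProductEquiv K ι w)) : ∃ c : K, w = c • r := by
  obtain ⟨c, hc⟩ := Module.Dual.exists_eq_smul_of_ker_le h.le
  exact ⟨c, (dotProductEquiv K ι).injective (by rw [hc, map_smul])⟩

theorem Submodule.eq_map_iff_comap_eq_of_bijective {f : V →ₗ[K] V} (hf : Function.Bijective f)
    (N P : Submodule K V) : N = P.map f ↔ N.comap f = P := by
  constructor
  · rintro rfl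
    exact Submodule.comap_map_eq_of_injective hf.1 P
  · rintro rfl
    exact (Submodule.map_comap_eq_of_surjective hf.2 N).symm

end LinearAlgebra

theorem isSquare_sq_mul_iff {K : Type*} [Field K] {k : K} (hk : k ≠ 0) (x : K) :
    IsSquare (k ^ 2 * x) ↔ IsSquare x := by
  refine ⟨fun ⟨y, hy⟩ => ⟨y / k, ?_⟩, (IsSquare.sq k).mul⟩
  field_simp
  linear_combination hy

theorem FiniteField.isSquare_mul_of_not_isSquare {F : Type*} [Field F] [Fintype F]
    [DecidableEq F] {x y : F} (hx : ¬IsSquare x) (hy : ¬IsSquare y) : IsSquare (x * y) := by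
  have hx0 : x ≠ 0 := by rintro rfl; exact hx ⟨0, by ring⟩
  have hy0 : y ≠ 0 := by rintro rfl; exact hy ⟨0, by ring⟩
  refine (quadraticChar_one_iff_isSquare (mul_ne_zero hx0 hy0)).mp ?_
  rw [map_mul, quadraticChar_neg_one_iff_not_isSquare.mpr hx,
    quadraticChar_neg_one_iff_not_isSquare.mpr hy]
  norm_num

section Plane

variable {K : Type*} [Field K]

theorem eq_zero_and_eq_zero_of_det_ne_zero {α1 α2 β1 β2 a b : K} (hD : α1 * β2 - α2 * β1 ≠ 0)
    (hα : a * α1 + b * α2 = 0) (hβ : a * β1 + b * β2 = 0) : a = 0 ∧ b = 0 := by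
  constructor
  · refine (mul_eq_zero.mp (?_ : a * (α1 * β2 - α2 * β1) = 0)).resolve_right hD
    linear_combination β2 * hα - α2 * hβ
  · refine (mul_eq_zero.mp (?_ : b * (α1 * β2 - α2 * β1) = 0)).resolve_right hD
    linear_combination α1 * hβ - β1 * hα

theorem exists_det_eq_of_ne_zero {a b D : K} (hab : ¬(a = 0 ∧ b = 0)) :
    ∃ α1 α2 β1 β2 : K, α1 * β2 - α2 * β1 = D ∧ a * α1 + b * α2 = 0 ∧ a * β1 + b * β2 = 1 := by
  by_cases ha : a = 0
  · have hb : b ≠ 0 := fun hb => hab ⟨ha, hb⟩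
    exact ⟨D * b, 0, 0, b⁻¹, by simp [hb], by simp [ha], by field_simp; simp [ha]⟩
  · exact ⟨D * b, -(D * a), a⁻¹, 0, by field_simp; ring, by ring, by field_simp; ring⟩

end Plane

section OrbitIndex

variable {K : Type*} [Field K]

def disc (r : Fin 4 → K) : K := r 1 * r 2 - r 0 * r 3

open Classical in
noncomputable def orbitIndex (r : Fin 4 → K) : Fin 5 :=
  if r 2 = 0 ∧ r 3 = 0 then 0
  else if r 0 = 0 ∧ r 1 = 0 then 1
  else if disc r = 0 then 2
  else if IsSquare (disc r) then 3
  else 4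

theorem exists_eq_mul_of_disc_eq_zero {r : Fin 4 → K} (h01 : ¬(r 0 = 0 ∧ r 1 = 0))
    (hδ : disc r = 0) : ∃ t : K, r 2 = t * r 0 ∧ r 3 = t * r 1 := by
  unfold disc at hδ
  by_cases h0 : r 0 = 0
  · have h1 : r 1 ≠ 0 := fun h1 => h01 ⟨h0, h1⟩
    refine ⟨r 3 / r 1, ?_, by field_simp⟩
    simpa [h0, h1] using hδ
  · exact ⟨r 2 / r 0, by field_simp, by field_simp; linear_combination -hδ⟩

theorem orbitIndex_eq_of_disc_eq {r r' : Fin 4 → K} {k : K} (hk : k ≠ 0)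
    (h23 : r' 2 = 0 ∧ r' 3 = 0 ↔ r 2 = 0 ∧ r 3 = 0)
    (h01 : r' 0 = 0 ∧ r' 1 = 0 ↔ r 0 = 0 ∧ r 1 = 0)
    (hdisc : disc r' = k ^ 2 * disc r) : orbitIndex r' = orbitIndex r := by
  classical
  simp only [orbitIndex, h23, h01, hdisc, isSquare_sq_mul_iff hk, mul_eq_zero,
    pow_eq_zero_iff two_ne_zero, hk, false_or]

theorem orbitIndex_smul {c : K} (hc : c ≠ 0) (r : Fin 4 → K) :
    orbitIndex (c • r) = orbitIndex r :=
  orbitIndex_eq_of_disc_eq hc (by simp [hc]) (by simp [hc])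
    (by simp only [disc, Pi.smul_apply, smul_eq_mul]; ring)

end OrbitIndex

section GLAction

variable {p : ℕ}

theorem vecMul_glAct (r : Fin 4 → ZMod p) (α1 α2 β1 β2 : ZMod p) :
    r ᵥ* glAct p α1 α2 β1 β2 =
      ![r 0 * α1 + r 1 * α2, r 0 * β1 + r 1 * β2,
        (α1 * β2 - α2 * β1) * (r 2 * α1 + r 3 * α2),
        (α1 * β2 - α2 * β1) * (r 2 * β1 + r 3 * β2)] := by
  funext j
  fin_cases j <;>
    simp only [vecMul, dotProduct, glAct, Fin.sum_univ_four, of_apply, cons_val', cons_val_zero,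
      cons_val_one, cons_val, cons_val_fin_one, Fin.isValue, Fin.reduceFinMk, Fin.zero_eta,
      Fin.mk_one] <;>
    ring

theorem det_glAct (α1 α2 β1 β2 : ZMod p) :
    (glAct p α1 α2 β1 β2).det = (α1 * β2 - α2 * β1) ^ 4 := by
  simp [glAct, det_succ_row_zero, Fin.sum_univ_succ, Fin.succAbove]
  ring

variable [Fact p.Prime] {α1 α2 β1 β2 : ZMod p}

theorem bijective_toLin'_glAct (hD : α1 * β2 - α2 * β1 ≠ 0) :
    Function.Bijective (toLin' (glAct p α1 α2 β1 β2)) := by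
  have hA : IsUnit (glAct p α1 α2 β1 β2) := by
    rw [Matrix.isUnit_iff_isUnit_det, det_glAct]
    exact (pow_ne_zero 4 hD).isUnit
  exact ⟨mulVec_injective_iff_isUnit.mpr hA, mulVec_surjective_iff_isUnit.mpr hA⟩

theorem orbitIndex_vecMul_glAct (hD : α1 * β2 - α2 * β1 ≠ 0) (r : Fin 4 → ZMod p) :
    orbitIndex (r ᵥ* glAct p α1 α2 β1 β2) = orbitIndex r := by
  refine orbitIndex_eq_of_disc_eq hD ?_ ?_ ?_ <;> simp only [vecMul_glAct, cons_val, disc]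
  · constructor
    · rintro ⟨h2, h3⟩
      exact eq_zero_and_eq_zero_of_det_ne_zero hD
        ((mul_eq_zero.mp h2).resolve_left hD) ((mul_eq_zero.mp h3).resolve_left hD)
    · rintro ⟨h2, h3⟩
      simp [h2, h3]
  · constructor
    · rintro ⟨h0, h1⟩
      exact eq_zero_and_eq_zero_of_det_ne_zero hD h0 h1
    · rintro ⟨h0, h1⟩
      simp [h0, h1]
  · ring

end GLAction

def repsNormal (p : ℕ) (lam : ZMod p) : Fin 5 → Fin 4 → ZMod p :=
  ![![0, 1, 0, 0], ![0, 0, 0, 1], ![0, 1, 0, -1], ![1, 0, 0, -1], ![1, 0, 0, -lam]]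

section Representatives

variable {p : ℕ}

theorem reps_eq_ker (lam : ZMod p) (i : Fin 5) :
    reps p lam i = ker (dotProductEquiv (ZMod p) (Fin 4) (repsNormal p lam i)) := by
  ext x
  rw [mem_ker, dotProductEquiv_apply_apply]
  fin_cases i <;> simp [reps, repsNormal, Submodule.mem_span_triple, dotProduct, Fin.sum_univ_four,
    funext_iff, Fin.forall_fin_succ, @eq_comm _ (0 : ZMod p), add_neg_eq_zero, mul_comm]
  exact eq_comm

variable [Fact p.Prime]

theorem repsNormal_ne_zero (lam : ZMod p) (i : Fin 5) : repsNormal p lam i ≠ 0 := by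
  fin_cases i <;> simp [repsNormal, funext_iff, Fin.exists_fin_succ]

theorem orbitIndex_repsNormal {lam : ZMod p} (hlam : p ≠ 2 → ¬IsSquare lam) {i : Fin 5}
    (hi : p = 2 → i ≠ 4) : orbitIndex (repsNormal p lam i) = i := by
  obtain rfl | hi4 := eq_or_ne i 4
  · have hp2 : p ≠ 2 := fun hp => hi hp rfl
    have hlam0 : lam ≠ 0 := by
      rintro rfl
      exact hlam hp2 ⟨0, by ring⟩
    simp [orbitIndex, repsNormal, disc, hlam0, hlam hp2]
  · fin_cases i <;> simp_all [orbitIndex, repsNormal, disc]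

end Representatives

section Existence

variable {p : ℕ} [Fact p.Prime] {r : Fin 4 → ZMod p}

theorem exists_glAct_of_right_eq_zero (h23 : r 2 = 0 ∧ r 3 = 0) (h01 : ¬(r 0 = 0 ∧ r 1 = 0)) :
    ∃ α1 α2 β1 β2 : ZMod p, α1 * β2 - α2 * β1 ≠ 0 ∧
      r ᵥ* glAct p α1 α2 β1 β2 = ![0, 1, 0, 0] := by
  obtain ⟨α1, α2, β1, β2, hD, hα, hβ⟩ := exists_det_eq_of_ne_zero (D := (1 : ZMod p)) h01
  exact ⟨α1, α2, β1, β2, by simp [hD], by simp [vecMul_glAct, hα, hβ, h23.1, h23.2]⟩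

theorem exists_glAct_of_left_eq_zero (h01 : r 0 = 0 ∧ r 1 = 0) (h23 : ¬(r 2 = 0 ∧ r 3 = 0)) :
    ∃ α1 α2 β1 β2 : ZMod p, α1 * β2 - α2 * β1 ≠ 0 ∧
      r ᵥ* glAct p α1 α2 β1 β2 = ![0, 0, 0, 1] := by
  obtain ⟨α1, α2, β1, β2, hD, hα, hβ⟩ := exists_det_eq_of_ne_zero (D := (1 : ZMod p)) h23
  exact ⟨α1, α2, β1, β2, by simp [hD], by simp [vecMul_glAct, hD, hα, hβ, h01.1, h01.2]⟩

theorem exists_glAct_of_disc_eq_zero (h23 : ¬(r 2 = 0 ∧ r 3 = 0)) (h01 : ¬(r 0 = 0 ∧ r 1 = 0))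
    (hδ : disc r = 0) : ∃ α1 α2 β1 β2 : ZMod p, α1 * β2 - α2 * β1 ≠ 0 ∧
      r ᵥ* glAct p α1 α2 β1 β2 = ![0, 1, 0, -1] := by
  obtain ⟨t, ht2, ht3⟩ := exists_eq_mul_of_disc_eq_zero h01 hδ
  have ht : t ≠ 0 := by
    rintro rfl
    exact h23 ⟨by simpa using ht2, by simpa using ht3⟩
  obtain ⟨α1, α2, β1, β2, hD, hα, hβ⟩ := exists_det_eq_of_ne_zero (D := -t⁻¹) h01
  refine ⟨α1, α2, β1, β2, by simp [hD, ht], ?_⟩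
  have hα' : r 2 * α1 + r 3 * α2 = 0 := by rw [ht2, ht3]; linear_combination t * hα
  have hβ' : r 2 * β1 + r 3 * β2 = t := by rw [ht2, ht3]; linear_combination t * hβ
  simp [vecMul_glAct, hD, hα, hβ, hα', hβ', ht]

-- `g` sends `(r 0, r 1) ↦ (1, 0)` and `(r 2, r 3) ↦ (0, e)`, so `det g = -e / disc r`.
theorem exists_glAct_of_sq_eq {e μ : ZMod p} (hδ : disc r ≠ 0) (he : e ≠ 0)
    (heμ : e ^ 2 = μ * disc r) : ∃ α1 α2 β1 β2 : ZMod p, α1 * β2 - α2 * β1 ≠ 0 ∧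
      r ᵥ* glAct p α1 α2 β1 β2 = ![1, 0, 0, -μ] := by
  have hD : -r 3 / disc r * (-(e * r 0) / disc r) - r 2 / disc r * (e * r 1 / disc r) =
      -e / disc r := by
    field_simp
    unfold disc
    ring
  refine ⟨-r 3 / disc r, r 2 / disc r, e * r 1 / disc r, -(e * r 0) / disc r, ?_, ?_⟩
  · rw [hD]
    exact div_ne_zero (neg_ne_zero.mpr he) hδ
  have hα : r 0 * (-r 3 / disc r) + r 1 * (r 2 / disc r) = 1 := by
    field_simp
    unfold disc
    ring
  have hβ : r 2 * (e * r 1 / disc r) + r 3 * (-(e * r 0) / disc r) = e := by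
    field_simp
    unfold disc
    ring
  have hμ : -e / disc r * e = -μ := by
    field_simp
    linear_combination -heμ
  have hα' : r 2 * (-r 3 / disc r) + r 3 * (r 2 / disc r) = 0 := by ring
  have hβ' : r 0 * (e * r 1 / disc r) + r 1 * (-(e * r 0) / disc r) = 0 := by ring
  rw [vecMul_glAct, hD, hα, hβ, hα', hβ', mul_zero, hμ]

theorem ZMod.isSquare_of_eq_two (hp : p = 2) (x : ZMod p) : IsSquare x :=
  FiniteField.isSquare_of_char_two (by rw [ZMod.ringChar_zmod_n, hp]) x

theorem orbitIndex_ne_four_of_eq_two (hp : p = 2) (r : Fin 4 → ZMod p) : orbitIndex r ≠ 4 := by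
  have hsq := ZMod.isSquare_of_eq_two hp (disc r)
  unfold orbitIndex
  split_ifs <;> decide

theorem exists_vecMul_glAct_eq_repsNormal_orbitIndex {lam : ZMod p}
    (hlam : p ≠ 2 → ¬IsSquare lam) (hr : r ≠ 0) : ∃ α1 α2 β1 β2 : ZMod p, α1 * β2 - α2 * β1 ≠ 0 ∧
      r ᵥ* glAct p α1 α2 β1 β2 = repsNormal p lam (orbitIndex r) := by
  unfold orbitIndex
  split_ifs with h23 h01 hδ hsq
  · refine exists_glAct_of_right_eq_zero h23 fun h01 => hr ?_
    ext j
    fin_cases j <;> simp [h01, h23]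
  · exact exists_glAct_of_left_eq_zero h01 h23
  · exact exists_glAct_of_disc_eq_zero h23 h01 hδ
  · obtain ⟨e, he⟩ := hsq
    refine exists_glAct_of_sq_eq (μ := 1) hδ ?_ (by rw [he]; ring)
    rintro rfl
    exact hδ (by simpa using he)
  · have hp2 : p ≠ 2 := fun hp => hsq (ZMod.isSquare_of_eq_two hp _)
    obtain ⟨e, he⟩ := FiniteField.isSquare_mul_of_not_isSquare (hlam hp2) hsq
    refine exists_glAct_of_sq_eq (μ := lam) hδ ?_ (by rw [he]; ring)
    rintro rfl
    have hlam0 : lam = 0 := (mul_eq_zero.mp (by simpa using he)).resolve_right hδ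
    exact hlam hp2 ⟨0, by rw [hlam0]; ring⟩

end Existence

theorem ker_eq_map_glAct_reps_iff {p : ℕ} [Fact p.Prime] {α1 α2 β1 β2 : ZMod p}
    (hD : α1 * β2 - α2 * β1 ≠ 0) (lam : ZMod p) (i : Fin 5) (r : Fin 4 → ZMod p) :
    ker (dotProductEquiv (ZMod p) (Fin 4) r) =
        (reps p lam i).map (toLin' (glAct p α1 α2 β1 β2)) ↔
      ker (dotProductEquiv (ZMod p) (Fin 4) (r ᵥ* glAct p α1 α2 β1 β2)) =
        ker (dotProductEquiv (ZMod p) (Fin 4) (repsNormal p lam i)) := by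
  rw [Submodule.eq_map_iff_comap_eq_of_bijective (bijective_toLin'_glAct hD),
    comap_toLin'_ker_dotProductEquiv, reps_eq_ker]

theorem stmt_16_general (p : ℕ) (hp : p.Prime)
    (lam : ZMod p) (hlam : p ≠ 2 → ∀ c : ZMod p, c ^ 2 ≠ lam) :
    ∀ N : Submodule (ZMod p) (Fin 4 → ZMod p),
      Module.finrank (ZMod p) N = 3 →
      ∃! i : Fin 5, (p = 2 → i ≠ 4) ∧
        ∃ α1 α2 β1 β2 : ZMod p, α1 * β2 - α2 * β1 ≠ 0 ∧
          N = Submodule.map (Matrix.toLin' (glAct p α1 α2 β1 β2)) (reps p lam i) := by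
  have := Fact.mk hp
  have hlam' : p ≠ 2 → ¬IsSquare lam := fun hp2 ⟨c, hc⟩ => hlam hp2 c (by rw [hc, sq])
  intro N hN
  obtain ⟨f, hf, rfl⟩ :=
    Submodule.exists_dual_ker_eq_of_finrank_add_one_eq (N := N) (by simp [hN])
  obtain ⟨r, rfl⟩ := (dotProductEquiv (ZMod p) (Fin 4)).surjective f
  have hr : r ≠ 0 := by
    rintro rfl
    exact hf (map_zero _)
  refine ⟨orbitIndex r, ⟨fun hp2 => orbitIndex_ne_four_of_eq_two hp2 r, ?_⟩, ?_⟩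
  · obtain ⟨α1, α2, β1, β2, hD, hrow⟩ := exists_vecMul_glAct_eq_repsNormal_orbitIndex hlam' hr
    exact ⟨α1, α2, β1, β2, hD, (ker_eq_map_glAct_reps_iff hD lam _ r).mpr (by rw [hrow])⟩
  · rintro j ⟨hj, α1, α2, β1, β2, hD, hmap⟩
    obtain ⟨c, hc⟩ :=
      exists_eq_smul_of_ker_dotProductEquiv_eq ((ker_eq_map_glAct_reps_iff hD lam j r).mp hmap)
    have hc0 : c ≠ 0 := by
      rintro rfl
      exact repsNormal_ne_zero lam j (by simpa using hc)
    rw [← orbitIndex_repsNormal hlam' hj, hc, orbitIndex_smul hc0, orbitIndex_vecMul_glAct hD]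

/-- For a prime `p ≠ 3`, every 3-dimensional subspace of `(ℤ_p)⁴` lies in the orbit of
exactly one of `N1, …, N5` (`N5` excluded when `p = 2`) under the induced `GL_2(p)`-action. -/
theorem stmt_16 (p : ℕ) (hp : p.Prime) (hp3 : p ≠ 3)
    (lam : ZMod p) (hlam : p ≠ 2 → ∀ c : ZMod p, c ^ 2 ≠ lam) :
    ∀ N : Submodule (ZMod p) (Fin 4 → ZMod p),
      Module.finrank (ZMod p) N = 3 →
      ∃! i : Fin 5, (p = 2 → i ≠ 4) ∧
        ∃ α1 α2 β1 β2 : ZMod p, α1 * β2 - α2 * β1 ≠ 0 ∧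
          N = Submodule.map (Matrix.toLin' (glAct p α1 α2 β1 β2)) (reps p lam i) :=
  stmt_16_general p hp lam hlam
end
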